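/- arXiv:2502.15540 — 3 statements merged into one kernel-verified Lean document; each statement's English description precedes it below -/
import Mathlib

section
/- Lemma 1 (permutation inequality). Fix n ≥ 1 and finite label alphabet [C]. Let y, y′, ŷ, ŷ′ ∈ [C]ⁿ satisfy: y_r = y′_r for all r ∈ [R], and {y_{R+1},…,y_n} ∩ {y′_{R+1},…,y′_n} = ∅, where R = n − (n/2)·‖p̂_y − p̂_{y′}‖₁. Form the concatenated vectors y^{2n} = (y,y′) and ŷ^{2n} = (ŷ,ŷ′) of length 2n. Let π_R be any permutation of [2n] which, for each r ∈ [R], permutes the pair {r, n+r} (either fixing it or swapping it) and fixes every index in [R+1:n] ∪ [n+R+1:2n]; let π be any permutation of [2n] agreeing with π_R on [R] ∪ [n+1:n+R] and which, for each r ∈ [R+1:n], either fixes or swaps the pair {r, n+r}. For any permutation τ of [2n], write v_τ := (v^{2n}_{τ(1)},…,v^{2n}_{τ(n)}) and v′_τ := (v^{2n}_{τ(n+1)},…,v^{2n}_{τ(2n)}) for v ∈ {y,ŷ}. Then: h_D( L̂(y′_{π_R}, ŷ′_{π_R}), L̂(y_{π_R}, ŷ_{π_R}) ) − h_C( L̂(y_{π_R},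 ŷ_{π_R}), L̂(y′_{π_R}, ŷ′_{π_R}) ; (1/2)·‖p̂_y − p̂_{y′}‖₁ ) ≤ h_D( L̂(y′_π, ŷ′_π), L̂(y_π, ŷ_π) ). -/
open MeasureTheory ProbabilityTheory Real
open scoped ENNReal

noncomputable section

/-- Binary Shannon entropy (base 2). -/
def hb (x : ℝ) : ℝ := -(x * Real.logb 2 x) - (1 - x) * Real.logb 2 (1 - x)

/-- The function `h_D`. -/
def hD (x₁ x₂ : ℝ) : ℝ := 2 * hb ((x₁ + x₂) / 2) - hb x₁ - hb x₂

/-- The function `h_C`. -/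
def hCfun (x₁ x₂ ε : ℝ) : ℝ :=
  sSup ((fun ε' => hb (min x₁ x₂ + ε') - hb (min x₁ x₂) + hb (max x₁ x₂ - ε') - hb (max x₁ x₂)) ''
    Set.Icc 0 (min ε ((max x₁ x₂ - min x₁ x₂) / 2)))

/-- Empirical error rate `L̂(y, yh)`. -/
def empErr {C n : ℕ} (y yh : Fin n → Fin C) : ℝ :=
  (n : ℝ)⁻¹ * ∑ i, (if yh i ≠ y i then (1 : ℝ) else 0)

/-- `‖p̂_y − p̂_{y′}‖₁`, the ℓ₁ distance between empirical label distributions. -/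
def empTV {C n : ℕ} (y y' : Fin n → Fin C) : ℝ :=
  ∑ c : Fin C, |(n : ℝ)⁻¹ * (∑ i, if y i = c then (1 : ℝ) else 0) -
      (n : ℝ)⁻¹ * (∑ i, if y' i = c then (1 : ℝ) else 0)|

open Classical in
/-- Kullback–Leibler divergence (in `ℝ≥0∞`). -/
def klDiv {α : Type*} [MeasurableSpace α] (μ ν : Measure α) : ℝ≥0∞ :=
  if μ ≪ ν ∧ Integrable (llr μ ν) μ then ENNReal.ofReal (∫ x, llr μ ν x ∂μ) else ∞

end

noncomputable section

/-- `τ` acts on the pair `{r, n+r}` of indices of `Fin (n+n)`: it either fixes both or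
swaps them. -/
def PreservesPair {n : ℕ} (τ : Equiv.Perm (Fin (n + n))) (r : Fin n) : Prop :=
  (τ (Fin.castAdd n r) = Fin.castAdd n r ∧ τ (Fin.natAdd n r) = Fin.natAdd n r) ∨
    (τ (Fin.castAdd n r) = Fin.natAdd n r ∧ τ (Fin.natAdd n r) = Fin.castAdd n r)

/-- First half of a concatenated vector, permuted by `τ`: `v_τ = (v^{2n}_{τ(1)},…,v^{2n}_{τ(n)})`. -/
def permFst {α : Type*} {n : ℕ} (v v' : Fin n → α) (τ : Equiv.Perm (Fin (n + n))) :
    Fin n → α :=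
  fun i => Fin.append v v' (τ (Fin.castAdd n i))

/-- Second half of a concatenated vector, permuted by `τ`:
`v′_τ = (v^{2n}_{τ(n+1)},…,v^{2n}_{τ(2n)})`. -/
def permSnd {α : Type*} {n : ℕ} (v v' : Fin n → α) (τ : Equiv.Perm (Fin (n + n))) :
    Fin n → α :=
  fun i => Fin.append v v' (τ (Fin.natAdd n i))


section AuxAnalytic
open Real Set

lemma hb_def (x : ℝ) : hb x = Real.binEntropy x / Real.log 2 := by
  simp [hb, Real.binEntropy, Real.logb, Real.log_inv, div_eq_mul_inv]; ring

lemma continuous_hb : Continuous hb := by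
  have : hb = fun x => Real.binEntropy x / Real.log 2 := funext hb_def
  rw [this]; exact Real.binEntropy_continuous.div_const _

lemma concave_hb : ConcaveOn ℝ (Set.Icc 0 1) hb := by
  have h := (Real.strictConcave_binEntropy.concaveOn).smul
    (c := (Real.log 2)⁻¹) (by positivity)
  suffices hh : hb = fun x => (Real.log 2)⁻¹ • Real.binEntropy x by rw [hh]; exact h
  funext x
  simp [hb_def, div_eq_mul_inv, mul_comm]

lemma hb_spread {x y x' y' : ℝ} (hx' : x' ∈ Icc (0:ℝ) 1) (hy' : y' ∈ Icc (0:ℝ) 1)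
    (hxx : x' ≤ x) (hxy : x ≤ y) (hyy : y ≤ y') (hsum : x + y = x' + y') :
    hb x' + hb y' ≤ hb x + hb y := by
  rcases eq_or_lt_of_le (hxx.trans (hxy.trans hyy)) with h | h
  · have hx : x' = x := le_antisymm hxx (by linarith)
    have hy : y' = y := by linarith
    rw [hx, hy]
  · set lam := (y' - x) / (y' - x') with hlam
    have hd : 0 < y' - x' := by linarith
    have h1 : 0 ≤ lam := div_nonneg (by linarith) hd.le
    have h2 : lam ≤ 1 := by rw [hlam, div_le_one hd]; linarith
    have hxe : x = lam * x' + (1 - lam) * y' := by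
      rw [hlam]; field_simp; ring
    have hye : y = (1 - lam) * x' + lam * y' := by
      rw [hlam]; field_simp; linear_combination (y' - x') * hsum
    have c1 := concave_hb.2 hx' hy' h1 (show (0:ℝ) ≤ 1 - lam by linarith)
      (show lam + (1 - lam) = 1 by ring)
    have c2 := concave_hb.2 hx' hy' (show (0:ℝ) ≤ 1 - lam by linarith) h1
      (show (1 - lam) + lam = 1 by ring)
    simp only [smul_eq_mul] at c1 c2
    rw [← hxe] at c1
    rw [← hye] at c2
    linarith

lemma hCfun_ge {a b ε ε' : ℝ}
    (hε' : ε' ∈ Icc 0 (min ε ((max a b - min a b) / 2))) :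
    hb (min a b + ε') - hb (min a b) + hb (max a b - ε') - hb (max a b) ≤ hCfun a b ε := by
  apply le_csSup
  · exact (isCompact_Icc.image (by
      exact ((((continuous_hb.comp (continuous_const.add continuous_id)).sub
        continuous_const).add
        (continuous_hb.comp (continuous_const.sub continuous_id))).sub
        continuous_const))).bddAbove
  · exact Set.mem_image_of_mem _ hε'

lemma key_ineq {a b a' b' ε : ℝ} (ha : a ∈ Icc (0:ℝ) 1) (hB : b ∈ Icc (0:ℝ) 1)
    (ha' : a' ∈ Icc (0:ℝ) 1) (hB' : b' ∈ Icc (0:ℝ) 1)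
    (hsum : a + b = a' + b') (hdiff : |a' - a| ≤ ε) :
    hb a' + hb b' ≤ hb a + hb b + hCfun a b ε := by
  have hε : 0 ≤ ε := (abs_nonneg _).trans hdiff
  set m := min a b with hm
  set M := max a b with hM
  have hmM : m + M = a + b := min_add_max a b
  have hsum' : min a' b' + max a' b' = a' + b' := min_add_max a' b'
  have hbab : hb m + hb M = hb a + hb b := by
    rcases le_total a b with h | h <;>
      simp [hm, hM, min_eq_left, max_eq_right, min_eq_right, max_eq_left, h, add_comm]
  have hbab' : hb (min a' b') + hb (max a' b') = hb a' + hb b' := by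
    rcases le_total a' b' with h | h <;>
      simp [min_eq_left, max_eq_right, min_eq_right, max_eq_left, h, add_comm]
  have hmm : m ≤ M := min_le_max
  have hmm' : min a' b' ≤ max a' b' := min_le_max
  have habs : M - m - (max a' b' - min a' b') ≤ 2 * ε := by
    have h1 : max a' b' - min a' b' = |a' - b'| := by
      rcases le_total a' b' with h | h <;>
        rw [abs_sub_comm] <;>
        simp [min_eq_left, max_eq_right, min_eq_right, max_eq_left, h, abs_of_nonneg,
          abs_of_nonpos, sub_nonneg, sub_nonpos]
    have h2 : M - m = |a - b| := by
      rcases le_total a b with h | h <;>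
        rw [abs_sub_comm] <;>
        simp [hm, hM, min_eq_left, max_eq_right, min_eq_right, max_eq_left, h, abs_of_nonneg,
          abs_of_nonpos, sub_nonneg, sub_nonpos]
    have h3 : a' - b' = (a - b) + 2 * (a' - a) := by linarith
    have h5 := abs_sub_abs_le_abs_sub (a - b) (a' - b')
    have h4 : |(a - b) - (a' - b')| = 2 * |a' - a| := by
      rw [h3]; rw [show (a - b) - ((a - b) + 2 * (a' - a)) = 2 * (a - a') by ring]
      rw [abs_mul, abs_sub_comm]; norm_num
    rw [h1, h2]
    calc |a - b| - |a' - b'| ≤ |(a - b) - (a' - b')| := h5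
      _ = 2 * |a' - a| := h4
      _ ≤ 2 * ε := by linarith
  rcases le_total (M - m) (max a' b' - min a' b') with hc | hc
  · have h0 : (0:ℝ) ∈ Icc 0 (min ε ((M - m) / 2)) := by
      constructor
      · rfl
      · exact le_min hε (by linarith)
    have hge := hCfun_ge (a := a) (b := b) (ε := ε) h0
    simp only [add_zero, sub_zero] at hge
    have hsp := hb_spread (x := m) (y := M) (x' := min a' b') (y' := max a' b')
      (by constructor
          · exact le_min ha'.1 hB'.1
          · exact (min_le_left _ _).trans ha'.2)
      (by constructor
          · exact ha'.1.trans (le_max_left _ _)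
          · exact max_le ha'.2 hB'.2)
      (by linarith) hmm (by linarith) (by linarith)
    linarith
  · set ε₀ := ((M - m) - (max a' b' - min a' b')) / 2 with hε₀
    have h0 : ε₀ ∈ Icc 0 (min ε ((M - m) / 2)) := by
      constructor
      · rw [hε₀]; linarith
      · exact le_min (by rw [hε₀]; linarith) (by rw [hε₀]; linarith)
    have hge := hCfun_ge (a := a) (b := b) (ε := ε) h0
    have e1 : m + ε₀ = min a' b' := by rw [hε₀]; linarith
    have e2 : M - ε₀ = max a' b' := by rw [hε₀]; linarith
    rw [e1, e2] at hge
    linarith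

lemma avg_mem_Icc {n : ℕ} (hn : 1 ≤ n) (f : Fin n → ℝ)
    (hf : ∀ i, f i ∈ Icc (0:ℝ) 1) : (n : ℝ)⁻¹ * ∑ i, f i ∈ Icc (0:ℝ) 1 := by
  have hn0 : (0:ℝ) < n := by exact_mod_cast hn
  constructor
  · exact mul_nonneg (by positivity) (Finset.sum_nonneg fun i _ => (hf i).1)
  · have : ∑ i, f i ≤ (n : ℝ) := by
      calc ∑ i, f i ≤ ∑ _i : Fin n, (1:ℝ) := Finset.sum_le_sum fun i _ => (hf i).2
        _ = n := by simp
    rw [inv_mul_le_iff₀ hn0, mul_one]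
    exact this

end AuxAnalytic

section AuxComb
open Real Set
variable {α : Type*} {n : ℕ}

lemma castAdd_ne_natAdd (i j : Fin n) : Fin.castAdd n i ≠ Fin.natAdd n j := by
  intro h
  have := congrArg Fin.val h
  simp [Fin.coe_castAdd, Fin.coe_natAdd] at this
  omega

lemma permFst_eq (v v' : Fin n → α) (τ : Equiv.Perm (Fin (n + n)))
    (hτ : ∀ r, PreservesPair τ r) (i : Fin n) :
    permFst v v' τ i = if τ (Fin.castAdd n i) = Fin.castAdd n i then v i else v' i := by
  show Fin.append v v' (τ (Fin.castAdd n i)) = _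
  rcases hτ i with ⟨h1, _⟩ | ⟨h1, _⟩
  · rw [h1, if_pos rfl, Fin.append_left]
  · rw [h1, if_neg (Ne.symm (castAdd_ne_natAdd i i)), Fin.append_right]

lemma permSnd_eq (v v' : Fin n → α) (τ : Equiv.Perm (Fin (n + n)))
    (hτ : ∀ r, PreservesPair τ r) (i : Fin n) :
    permSnd v v' τ i = if τ (Fin.castAdd n i) = Fin.castAdd n i then v' i else v i := by
  show Fin.append v v' (τ (Fin.natAdd n i)) = _
  rcases hτ i with ⟨h1, h2⟩ | ⟨h1, h2⟩
  · rw [h1, h2, if_pos rfl, Fin.append_right]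
  · rw [h1, h2, if_neg (Ne.symm (castAdd_ne_natAdd i i)), Fin.append_left]

lemma empErr_permFst {C : ℕ} (y y' yh yh' : Fin n → Fin C) (τ : Equiv.Perm (Fin (n + n)))
    (hτ : ∀ r, PreservesPair τ r) :
    empErr (permFst y y' τ) (permFst yh yh' τ) =
      (n : ℝ)⁻¹ * ∑ i, (if τ (Fin.castAdd n i) = Fin.castAdd n i
        then (if yh i ≠ y i then (1:ℝ) else 0) else (if yh' i ≠ y' i then (1:ℝ) else 0)) := by
  unfold empErr
  congr 1
  refine Finset.sum_congr rfl fun i _ => ?_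
  rw [permFst_eq y y' τ hτ i, permFst_eq yh yh' τ hτ i]
  by_cases h : τ (Fin.castAdd n i) = Fin.castAdd n i <;> simp [h]

lemma empErr_permSnd {C : ℕ} (y y' yh yh' : Fin n → Fin C) (τ : Equiv.Perm (Fin (n + n)))
    (hτ : ∀ r, PreservesPair τ r) :
    empErr (permSnd y y' τ) (permSnd yh yh' τ) =
      (n : ℝ)⁻¹ * ∑ i, (if τ (Fin.castAdd n i) = Fin.castAdd n i
        then (if yh' i ≠ y' i then (1:ℝ) else 0) else (if yh i ≠ y i then (1:ℝ) else 0)) := by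
  unfold empErr
  congr 1
  refine Finset.sum_congr rfl fun i _ => ?_
  rw [permSnd_eq y y' τ hτ i, permSnd_eq yh yh' τ hτ i]
  by_cases h : τ (Fin.castAdd n i) = Fin.castAdd n i <;> simp [h]

lemma indicator_sum {R : ℕ} (hRn : R ≤ n) :
    ∑ i : Fin n, (if (i : ℕ) < R then (0:ℝ) else 1) = (n : ℝ) - R := by
  rw [Fin.sum_univ_eq_sum_range (fun k => if k < R then (0:ℝ) else 1)]
  rw [Finset.range_eq_Ico, ← Finset.sum_Ico_consecutive _ (Nat.zero_le R) hRn]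
  have h1 : ∑ i ∈ Finset.Ico 0 R, (if i < R then (0:ℝ) else 1) = 0 :=
    Finset.sum_eq_zero fun i hi => if_pos (Finset.mem_Ico.mp hi).2
  have h2 : ∑ i ∈ Finset.Ico R n, (if i < R then (0:ℝ) else 1) = ((n - R : ℕ) : ℝ) := by
    rw [Finset.sum_congr rfl (fun i hi => if_neg (not_lt.mpr (Finset.mem_Ico.mp hi).1))]
    simp [Nat.card_Ico]
  rw [h1, h2, zero_add]
  push_cast [hRn]
  ring

end AuxComb

/-- **Lemma 1 (permutation inequality).** -/
theorem permutation_inequality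
    {C n : ℕ} (hn : 1 ≤ n) (y y' yh yh' : Fin n → Fin C) (R : ℕ)
    (hR : (R : ℝ) = (n : ℝ) - ((n : ℝ) / 2) * empTV y y')
    (hmatch : ∀ i : Fin n, (i : ℕ) < R → y i = y' i)
    (hdisj : ∀ i j : Fin n, R ≤ (i : ℕ) → R ≤ (j : ℕ) → y i ≠ y' j)
    (pR p : Equiv.Perm (Fin (n + n)))
    (hpR₁ : ∀ r : Fin n, (r : ℕ) < R → PreservesPair pR r)
    (hpR₂ : ∀ r : Fin n, R ≤ (r : ℕ) →
      pR (Fin.castAdd n r) = Fin.castAdd n r ∧ pR (Fin.natAdd n r) = Fin.natAdd n r)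
    (hp₁ : ∀ r : Fin n, (r : ℕ) < R →
      p (Fin.castAdd n r) = pR (Fin.castAdd n r) ∧ p (Fin.natAdd n r) = pR (Fin.natAdd n r))
    (hp₂ : ∀ r : Fin n, R ≤ (r : ℕ) → PreservesPair p r) :
    hD (empErr (permSnd y y' pR) (permSnd yh yh' pR))
        (empErr (permFst y y' pR) (permFst yh yh' pR))
      - hCfun (empErr (permFst y y' pR) (permFst yh yh' pR))
          (empErr (permSnd y y' pR) (permSnd yh yh' pR)) (empTV y y' / 2)
      ≤ hD (empErr (permSnd y y' p) (permSnd yh yh' p))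
          (empErr (permFst y y' p) (permFst yh yh' p)) := by
  classical
  -- abbreviations
  set e : Fin n → ℝ := fun i => if yh i ≠ y i then (1:ℝ) else 0 with he
  set e' : Fin n → ℝ := fun i => if yh' i ≠ y' i then (1:ℝ) else 0 with he'
  have hn0 : (0:ℝ) < n := by exact_mod_cast hn
  have hTV : 0 ≤ empTV y y' := Finset.sum_nonneg fun _ _ => abs_nonneg _
  have hRnR : (R : ℝ) ≤ n := by
    rw [hR]
    have : 0 ≤ ((n:ℝ) / 2) * empTV y y' := mul_nonneg (by positivity) hTV
    linarith
  have hRn : R ≤ n := by exact_mod_cast hRnR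
  have hTpR : ∀ r, PreservesPair pR r := fun r => by
    by_cases h : (r : ℕ) < R
    · exact hpR₁ r h
    · exact Or.inl (hpR₂ r (le_of_not_gt h))
  have hTp : ∀ r, PreservesPair p r := fun r => by
    by_cases h : (r : ℕ) < R
    · unfold PreservesPair
      rw [(hp₁ r h).1, (hp₁ r h).2]
      exact hpR₁ r h
    · exact hp₂ r (le_of_not_gt h)
  -- the four error rates as explicit sums
  set t : Fin n → ℝ := fun i =>
    if pR (Fin.castAdd n i) = Fin.castAdd n i then e i else e' i with ht
  set s : Fin n → ℝ := fun i =>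
    if pR (Fin.castAdd n i) = Fin.castAdd n i then e' i else e i with hs
  set t' : Fin n → ℝ := fun i =>
    if p (Fin.castAdd n i) = Fin.castAdd n i then e i else e' i with ht'
  set s' : Fin n → ℝ := fun i =>
    if p (Fin.castAdd n i) = Fin.castAdd n i then e' i else e i with hs'
  have HA : empErr (permFst y y' pR) (permFst yh yh' pR) = (n:ℝ)⁻¹ * ∑ i, t i :=
    empErr_permFst y y' yh yh' pR hTpR
  have HB : empErr (permSnd y y' pR) (permSnd yh yh' pR) = (n:ℝ)⁻¹ * ∑ i, s i :=
    empErr_permSnd y y' yh yh' pR hTpR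
  have HA' : empErr (permFst y y' p) (permFst yh yh' p) = (n:ℝ)⁻¹ * ∑ i, t' i :=
    empErr_permFst y y' yh yh' p hTp
  have HB' : empErr (permSnd y y' p) (permSnd yh yh' p) = (n:ℝ)⁻¹ * ∑ i, s' i :=
    empErr_permSnd y y' yh yh' p hTp
  have hmem : ∀ (f : Fin n → ℝ), (∀ i, f i ∈ Set.Icc (0:ℝ) 1) →
      (n:ℝ)⁻¹ * ∑ i, f i ∈ Set.Icc (0:ℝ) 1 := fun f hf => avg_mem_Icc hn f hf
  have he01 : ∀ i, e i ∈ Set.Icc (0:ℝ) 1 := fun i => by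
    rw [he]; dsimp only; split <;> norm_num
  have he'01 : ∀ i, e' i ∈ Set.Icc (0:ℝ) 1 := fun i => by
    rw [he']; dsimp only; split <;> norm_num
  have ht01 : ∀ i, t i ∈ Set.Icc (0:ℝ) 1 := fun i => by
    rw [ht]; dsimp only; split
    · exact he01 i
    · exact he'01 i
  have hs01 : ∀ i, s i ∈ Set.Icc (0:ℝ) 1 := fun i => by
    rw [hs]; dsimp only; split
    · exact he'01 i
    · exact he01 i
  have ht'01 : ∀ i, t' i ∈ Set.Icc (0:ℝ) 1 := fun i => by
    rw [ht']; dsimp only; split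
    · exact he01 i
    · exact he'01 i
  have hs'01 : ∀ i, s' i ∈ Set.Icc (0:ℝ) 1 := fun i => by
    rw [hs']; dsimp only; split
    · exact he'01 i
    · exact he01 i
  -- equal sums
  have hts : ∀ i, t i + s i = e i + e' i := fun i => by
    rw [ht, hs]; dsimp only; split <;> ring
  have hts' : ∀ i, t' i + s' i = e i + e' i := fun i => by
    rw [ht', hs']; dsimp only; split <;> ring
  have hsum : (n:ℝ)⁻¹ * ∑ i, t i + (n:ℝ)⁻¹ * ∑ i, s i
      = (n:ℝ)⁻¹ * ∑ i, t' i + (n:ℝ)⁻¹ * ∑ i, s' i := by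
    rw [← mul_add, ← mul_add, ← Finset.sum_add_distrib, ← Finset.sum_add_distrib]
    rw [Finset.sum_congr rfl fun i _ => hts i, Finset.sum_congr rfl fun i _ => hts' i]
  -- difference bound
  have hper : ∀ i : Fin n, |t' i - t i| ≤ (if (i : ℕ) < R then (0:ℝ) else 1) := by
    intro i
    by_cases h : (i : ℕ) < R
    · rw [if_pos h]
      have hcond : p (Fin.castAdd n i) = pR (Fin.castAdd n i) := (hp₁ i h).1
      rw [ht, ht']; dsimp only
      rw [hcond]
      simp
    · rw [if_neg h]
      have h1 := ht'01 i
      have h2 := ht01 i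
      rw [abs_le]
      constructor <;> [linarith [h1.1, h2.2]; linarith [h1.2, h2.1]]
  have hdiff : |(n:ℝ)⁻¹ * ∑ i, t' i - (n:ℝ)⁻¹ * ∑ i, t i| ≤ empTV y y' / 2 := by
    rw [← mul_sub, ← Finset.sum_sub_distrib, abs_mul, abs_of_nonneg (by positivity : (0:ℝ) ≤ (n:ℝ)⁻¹)]
    have h1 : |∑ i, (t' i - t i)| ≤ ∑ i : Fin n, (if (i : ℕ) < R then (0:ℝ) else 1) :=
      (Finset.abs_sum_le_sum_abs _ _).trans (Finset.sum_le_sum fun i _ => hper i)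
    have h2 : (∑ i : Fin n, (if (i : ℕ) < R then (0:ℝ) else 1)) = (n:ℝ) - R :=
      indicator_sum hRn
    have h3 : (n:ℝ)⁻¹ * ((n:ℝ) - R) = empTV y y' / 2 := by
      rw [hR]
      field_simp
      ring
    calc (n:ℝ)⁻¹ * |∑ i, (t' i - t i)| ≤ (n:ℝ)⁻¹ * ((n:ℝ) - R) := by
          rw [← h2]
          exact mul_le_mul_of_nonneg_left h1 (by positivity)
      _ = empTV y y' / 2 := h3
  -- conclude
  rw [HA, HB, HA', HB']
  have hkey := key_ineq (hmem t ht01) (hmem s hs01) (hmem t' ht'01) (hmem s' hs'01)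
    hsum hdiff
  unfold hD
  have hsum2 : (n:ℝ)⁻¹ * ∑ i, s i + (n:ℝ)⁻¹ * ∑ i, t i
      = (n:ℝ)⁻¹ * ∑ i, s' i + (n:ℝ)⁻¹ * ∑ i, t' i := by linarith
  rw [hsum2]
  linarith

end
end

section
/- Unrealizable-case consequence of the function h_D: in the setup of Theorem 1, for any stochastic learning algorithm, ( E_{S,W}[gen(S,W)] )² ≤ E_{S,S′,W,Ŷ,Ŷ′}[ h_D( L̂(Y′,Ŷ′), L̂(Y,Ŷ) ) ]. -/
open MeasureTheory ProbabilityTheory Real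
open scoped ENNReal

noncomputable section

open ProbabilityTheory

section Setup

variable {𝒳 We Wd : Type*} [MeasurableSpace 𝒳] [MeasurableSpace We] [MeasurableSpace Wd]
  {C n d : ℕ}

/-- Expectation, under the joint law
`P_{S'} P_{S,W} P_{U,U'|X,X',W_e} P_{Ŷ,Ŷ'|U,U',W_d}` induced by the data distribution `μ`,
the learning algorithm `alg`, the encoder kernel `enc` and the decoder kernel `dec`, of a
function `g` of the training labels, test labels, training predictions and test predictions. -/
def jointExp (μ : Measure (𝒳 × Fin C)) (alg : Kernel (Fin n → 𝒳 × Fin C) (We × Wd))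
    (enc : Kernel (𝒳 × We) (Fin d → ℝ)) (dec : Kernel ((Fin d → ℝ) × Wd) (Fin C))
    (g : (Fin n → Fin C) → (Fin n → Fin C) → (Fin n → Fin C) → (Fin n → Fin C) → ℝ) : ℝ :=
  ∫ s, (∫ s', (∫ w, (∫ u, (∫ u', (∫ yh, (∫ yh',
      g (fun i => (s i).2) (fun i => (s' i).2) yh yh'
        ∂(Measure.pi fun i : Fin n => dec (u' i, w.2)))
        ∂(Measure.pi fun i : Fin n => dec (u i, w.2)))
        ∂(Measure.pi fun i : Fin n => enc ((s' i).1, w.1)))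
        ∂(Measure.pi fun i : Fin n => enc ((s i).1, w.1)))
        ∂(alg s))
        ∂(Measure.pi fun _ : Fin n => μ))
        ∂(Measure.pi fun _ : Fin n => μ)

/-- The 0-1 loss `ℓ(z,w) = P(Ŷ ≠ y | x, w)` of the model `w = (w_e, w_d)` on the sample `z`. -/
def loss (enc : Kernel (𝒳 × We) (Fin d → ℝ)) (dec : Kernel ((Fin d → ℝ) × Wd) (Fin C))
    (z : 𝒳 × Fin C) (w : We × Wd) : ℝ :=
  ∫ u, (∫ yh, (if yh ≠ z.2 then (1 : ℝ) else 0) ∂(dec (u, w.2))) ∂(enc (z.1, w.1))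

/-- The empirical risk `L̂(s, w)`. -/
def empRisk (enc : Kernel (𝒳 × We) (Fin d → ℝ)) (dec : Kernel ((Fin d → ℝ) × Wd) (Fin C))
    (s : Fin n → 𝒳 × Fin C) (w : We × Wd) : ℝ :=
  (n : ℝ)⁻¹ * ∑ i, loss enc dec (s i) w


/-- The population risk `L(w) = E_{Z∼μ}[ℓ(Z,w)]`. -/
def popRisk (μ : Measure (𝒳 × Fin C)) (enc : Kernel (𝒳 × We) (Fin d → ℝ))
    (dec : Kernel ((Fin d → ℝ) × Wd) (Fin C)) (w : We × Wd) : ℝ :=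
  ∫ z, loss enc dec z w ∂μ

/-- The expected generalization error `E_{S,W}[gen(S,W)] = E_{S,W}[L(W) − L̂(S,W)]`. -/
def expGen (μ : Measure (𝒳 × Fin C)) (alg : Kernel (Fin n → 𝒳 × Fin C) (We × Wd))
    (enc : Kernel (𝒳 × We) (Fin d → ℝ)) (dec : Kernel ((Fin d → ℝ) × Wd) (Fin C)) : ℝ :=
  ∫ s, (∫ w, (popRisk μ enc dec w - empRisk enc dec s w) ∂(alg s))
    ∂(Measure.pi fun _ : Fin n => μ)

end Setup


set_option linter.unusedSectionVars false
set_option maxHeartbeats 1000000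

section Part1
open Set
/-- binary KL in nats -/
def Dn (p q : ℝ) : ℝ := -(binEntropy p) - p * Real.log q - (1 - p) * Real.log (1 - q)

lemma hb_eq (x : ℝ) : hb x = binEntropy x / Real.log 2 := by
  simp only [hb, binEntropy, Real.logb, Real.log_inv]
  ring

lemma G_mono : MonotoneOn (fun x : ℝ => Real.log x - Real.log (1 - x) - 4 * x) (Ioo 0 1) := by
  set G := fun x : ℝ => Real.log x - Real.log (1 - x) - 4 * x with hGdef
  have hG : ∀ x ∈ Ioo (0:ℝ) 1, HasDerivAt G (x⁻¹ + (1 - x)⁻¹ - 4) x := by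
    intro x hx
    have hx0 : (0:ℝ) < x := hx.1
    have hx1 : (0:ℝ) < 1 - x := by linarith [hx.2]
    have h1 : HasDerivAt Real.log x⁻¹ x := Real.hasDerivAt_log hx0.ne'
    have h2 : HasDerivAt (fun x : ℝ => 1 - x) (-1) x := by
      simpa using (hasDerivAt_id x).const_sub 1
    have h3 : HasDerivAt (fun x : ℝ => Real.log (1 - x)) ((1 - x)⁻¹ * (-1)) x :=
      (Real.hasDerivAt_log hx1.ne').comp x h2
    have h4 : HasDerivAt (fun x : ℝ => 4 * x) 4 x := by
      simpa using (hasDerivAt_id x).const_mul 4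
    have := (h1.sub h3).sub h4
    exact this.congr_deriv (by ring)
  apply monotoneOn_of_deriv_nonneg (convex_Ioo 0 1)
  · exact fun x hx => ((hG x hx).differentiableAt.continuousAt).continuousWithinAt
  · intro x hx
    rw [interior_Ioo] at hx
    exact ((hG x hx).differentiableAt).differentiableWithinAt
  · intro x hx
    rw [interior_Ioo] at hx
    rw [(hG x hx).deriv]
    have hx0 : (0:ℝ) < x := hx.1
    have hx1 : (0:ℝ) < 1 - x := by linarith [hx.2]
    have e1 : x * x⁻¹ = 1 := mul_inv_cancel₀ hx0.ne'
    have e2 : (1 - x) * (1 - x)⁻¹ = 1 := mul_inv_cancel₀ hx1.ne'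
    have h5 : (0:ℝ) < x * (1 - x) := mul_pos hx0 hx1
    nlinarith [sq_nonneg (2 * x - 1), inv_pos.2 hx0, inv_pos.2 hx1,
      mul_pos (inv_pos.2 hx0) (inv_pos.2 hx1), sq_nonneg (x⁻¹ - (1 - x)⁻¹)]

lemma key1 {p q : ℝ} (hq0 : 0 < q) (hq1 : q < 1) (hp0 : 0 ≤ p) (hp1 : p ≤ 1) :
    2 * (p - q) ^ 2 ≤ Dn p q := by
  set G := fun x : ℝ => Real.log x - Real.log (1 - x) - 4 * x with hGdef
  set f := fun p : ℝ => Dn p q - 2 * (p - q) ^ 2 with hfdef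
  have hq : q ∈ Ioo (0:ℝ) 1 := ⟨hq0, hq1⟩
  have hfq : f q = 0 := by
    simp only [hfdef, Dn, binEntropy, Real.log_inv]
    ring
  have hf' : ∀ x ∈ Ioo (0:ℝ) 1, HasDerivAt f (G x - G q) x := by
    intro x hx
    have h1 : HasDerivAt binEntropy (Real.log (1 - x) - Real.log x) x :=
      Real.hasDerivAt_binEntropy hx.1.ne' (by linarith [hx.2] : x ≠ 1)
    have h2 : HasDerivAt (fun p : ℝ => p * Real.log q) (Real.log q) x := by
      simpa using (hasDerivAt_id x).mul_const (Real.log q)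
    have h3 : HasDerivAt (fun p : ℝ => (1 - p) * Real.log (1 - q)) (-Real.log (1 - q)) x := by
      simpa using ((hasDerivAt_id x).const_sub 1).mul_const (Real.log (1 - q))
    have h4 : HasDerivAt (fun p : ℝ => 2 * (p - q) ^ 2) (2 * (2 * (x - q) ^ 1 * 1)) x :=
      (((hasDerivAt_id x).sub_const q).pow 2).const_mul 2
    have := (((h1.neg.sub h2).sub h3).sub h4)
    exact this.congr_deriv (by simp only [hGdef]; ring)
  have hcont : Continuous f := by
    simp only [hfdef, Dn]
    fun_prop
  have hmono : MonotoneOn f (Icc q 1) := by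
    apply monotoneOn_of_deriv_nonneg (convex_Icc q 1) hcont.continuousOn
    · intro x hx
      rw [interior_Icc] at hx
      exact (hf' x ⟨hq0.trans hx.1, hx.2⟩).differentiableAt.differentiableWithinAt
    · intro x hx
      rw [interior_Icc] at hx
      have hx' : x ∈ Ioo (0:ℝ) 1 := ⟨hq0.trans hx.1, hx.2⟩
      rw [(hf' x hx').deriv]
      have := G_mono hq hx' hx.1.le
      linarith
  have hanti : AntitoneOn f (Icc 0 q) := by
    apply antitoneOn_of_deriv_nonpos (convex_Icc 0 q) hcont.continuousOn
    · intro x hx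
      rw [interior_Icc] at hx
      exact (hf' x ⟨hx.1, hx.2.trans hq1⟩).differentiableAt.differentiableWithinAt
    · intro x hx
      rw [interior_Icc] at hx
      have hx' : x ∈ Ioo (0:ℝ) 1 := ⟨hx.1, hx.2.trans hq1⟩
      rw [(hf' x hx').deriv]
      have := G_mono hx' hq hx.2.le
      linarith
  have h0 : 0 ≤ f p := by
    rcases le_total p q with h | h
    · have h2 := hanti ⟨hp0, h⟩ ⟨hq0.le, le_refl q⟩ h
      rw [hfq] at h2
      linarith
    · have h2 := hmono ⟨le_refl q, hq1.le⟩ ⟨h, hp1⟩ h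
      rw [hfq] at h2
      linarith
  simp only [hfdef] at h0
  linarith

lemma hb_nonneg' {x : ℝ} (h0 : 0 ≤ x) (h1 : x ≤ 1) : 0 ≤ hb x := by
  rw [hb_eq]
  exact div_nonneg (Real.binEntropy_nonneg h0 h1) (Real.log_nonneg one_le_two)

lemma hb_le_one' (x : ℝ) : hb x ≤ 1 := by
  rw [hb_eq, div_le_one (Real.log_pos one_lt_two)]
  exact Real.binEntropy_le_log_two

lemma abs_hD_le {a b : ℝ} (ha : a ∈ Icc (0:ℝ) 1) (hbm : b ∈ Icc (0:ℝ) 1) : |hD a b| ≤ 2 := by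
  have hm : (a + b) / 2 ∈ Icc (0:ℝ) 1 := by
    constructor <;> [linarith [ha.1, hbm.1]; linarith [ha.2, hbm.2]]
  have := hb_nonneg' ha.1 ha.2
  have := hb_nonneg' hbm.1 hbm.2
  have := hb_nonneg' hm.1 hm.2
  have := hb_le_one' a
  have := hb_le_one' b
  have := hb_le_one' ((a + b) / 2)
  rw [abs_le, hD]
  constructor <;> linarith

lemma sq_le_hD {a b : ℝ} (ha : a ∈ Icc (0:ℝ) 1) (hbm : b ∈ Icc (0:ℝ) 1) :
    (a - b) ^ 2 ≤ hD a b := by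
  rcases eq_or_ne a b with rfl | hab
  · have h : (a + a) / 2 = a := by ring
    simp only [hD, h, sub_self]
    have : 2 * hb a - hb a - hb a = 0 := by ring
    rw [this]
    norm_num
  · have h0 : 0 < a + b := by
      rcases lt_or_eq_of_le ha.1 with h | h
      · linarith [hbm.1]
      · rcases lt_or_eq_of_le hbm.1 with h' | h'
        · linarith
        · exact absurd (h.symm.trans h') hab
    have h2 : a + b < 2 := by
      rcases lt_or_eq_of_le ha.2 with h | h
      · linarith [hbm.2]
      · rcases lt_or_eq_of_le hbm.2 with h' | h'
        · linarith
        · exact absurd (h.trans h'.symm) hab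
    set m := (a + b) / 2 with hm
    have hm0 : 0 < m := by simp only [hm]; linarith
    have hm1 : m < 1 := by simp only [hm]; linarith
    have k1 := key1 hm0 hm1 ha.1 ha.2
    have k2 := key1 hm0 hm1 hbm.1 hbm.2
    have hDsum : 2 * Real.binEntropy m - Real.binEntropy a - Real.binEntropy b
        = Dn a m + Dn b m := by
      simp only [Dn, Real.binEntropy, Real.log_inv, hm]
      ring
    have hDexpr : hD a b = (2 * Real.binEntropy m - Real.binEntropy a - Real.binEntropy b)
        / Real.log 2 := by
      simp only [hD, hb_eq, ← hm]
      ring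
    have hlog2 : 0 < Real.log 2 := Real.log_pos one_lt_two
    have hlog2' : Real.log 2 ≤ 1 := by
      have := Real.log_two_lt_d9
      linarith
    have hsum : (a - b) ^ 2 ≤ Dn a m + Dn b m := by
      have e : 2 * (a - m) ^ 2 + 2 * (b - m) ^ 2 = (a - b) ^ 2 := by
        simp only [hm]; ring
      linarith
    rw [hDexpr, hDsum, le_div_iff₀ hlog2]
    nlinarith [sq_nonneg (a - b)]
end Part1


-- pi-integral of products over probability measures
lemma integral_pi_prod {ι : Type*} [Fintype ι] {α : Type*} [MeasurableSpace α]
    (m : ι → Measure α) [∀ i, IsProbabilityMeasure (m i)] (f : ι → α → ℝ) :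
    ∫ x, ∏ i, f i (x i) ∂Measure.pi m = ∏ i, ∫ x, f i x ∂(m i) := by
  letI M : ∀ i : ι, MeasureSpace ((fun _ : ι => α) i) := fun i => @MeasureSpace.mk α ‹_› (m i)
  haveI : ∀ i : ι, SigmaFinite (M i).volume := fun i => inferInstanceAs (SigmaFinite (m i))
  exact MeasureTheory.integral_fintype_prod_eq_prod (E := fun _ => α) f (μ := m)

-- finite-type expectation as a sum
lemma int_fin {β : Type*} [Fintype β] [MeasurableSpace β] [MeasurableSingletonClass β]
    (ρ : Measure β) [IsProbabilityMeasure ρ] (f : β → ℝ) :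
    ∫ b, f b ∂ρ = ∑ b, (ρ {b}).toReal * f b := by
  rw [MeasureTheory.integral_fintype Integrable.of_finite]
  simp [smul_eq_mul, Measure.real]

lemma sum_meas_singleton {β : Type*} [Fintype β] [MeasurableSpace β]
    [MeasurableSingletonClass β] (ρ : Measure β) [IsProbabilityMeasure ρ] :
    ∑ b, (ρ {b}).toReal = 1 := by
  have h : ∑ b, ρ {b} = 1 := by
    rw [← measure_univ (μ := ρ)]
    have : (Set.univ : Set β) = ⋃ b ∈ (Finset.univ : Finset β), {b} := by
      simpa using (Set.iUnion_of_singleton β).symm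
    rw [this, measure_biUnion_finset _ (fun b _ => measurableSet_singleton b)]
    intro x _ y _ hxy
    simp [Function.onFun, Set.disjoint_singleton, hxy]
  rw [← ENNReal.toReal_sum (fun b _ => measure_ne_top ρ _), h, ENNReal.toReal_one]

-- pi over finite types: expectation as a weighted sum
lemma int_pi_fin {β : Type*} [Fintype β] [MeasurableSpace β] [MeasurableSingletonClass β]
    {ι : Type*} [Fintype ι] [DecidableEq ι] (m : ι → Measure β) [∀ i, IsProbabilityMeasure (m i)]
    (f : (ι → β) → ℝ) :
    ∫ x, f x ∂Measure.pi m = ∑ x : ι → β, (∏ i, (m i {x i}).toReal) * f x := by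
  rw [int_fin]
  refine Finset.sum_congr rfl fun x _ => ?_
  congr 1
  have : ({x} : Set (ι → β)) = Set.pi Set.univ (fun i => {x i}) := by
    rw [Set.univ_pi_singleton]
  rw [this, Measure.pi_pi, ENNReal.toReal_prod]

-- bounded measurable implies integrable on finite measure
lemma int_bdd {α : Type*} [MeasurableSpace α] {μ : Measure α} [IsFiniteMeasure μ] {f : α → ℝ}
    (hf : AEStronglyMeasurable f μ) {M : ℝ} (h : ∀ x, |f x| ≤ M) : Integrable f μ :=
  Integrable.mono' (integrable_const M) hf (Filter.Eventually.of_forall fun x => by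
    rw [Real.norm_eq_abs]; exact h x)

-- Jensen for squares: probability measure
lemma sq_integral_le {α : Type*} [MeasurableSpace α] (μ : Measure α) [IsProbabilityMeasure μ]
    {f : α → ℝ} (hm : AEStronglyMeasurable f μ) {M : ℝ} (hb : ∀ x, |f x| ≤ M) :
    (∫ x, f x ∂μ) ^ 2 ≤ ∫ x, (f x) ^ 2 ∂μ := by
  have hM : 0 ≤ M := by
    have : Nonempty α := by
      by_contra h
      rw [not_nonempty_iff] at h
      have h1 : μ Set.univ = 1 := measure_univ
      rw [Set.univ_eq_empty_iff.2 h] at h1 <;> simp at h1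
    exact (abs_nonneg _).trans (hb (Classical.arbitrary α))
  have hf : Integrable f μ := int_bdd hm hb
  have hm2 : AEStronglyMeasurable (fun x => (f x) ^ 2) μ :=
    (continuous_pow 2).comp_aestronglyMeasurable hm
  have hf2 : Integrable (fun x => (f x) ^ 2) μ := by
    refine int_bdd hm2 (M := M ^ 2) fun x => ?_
    rw [abs_pow]
    exact pow_le_pow_left₀ (abs_nonneg _) (hb x) 2
  set c := ∫ x, f x ∂μ with hc
  have h0 : 0 ≤ ∫ x, (f x - c) ^ 2 ∂μ := integral_nonneg fun x => sq_nonneg _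
  have hexp : ∫ x, (f x - c) ^ 2 ∂μ = (∫ x, (f x) ^ 2 ∂μ) - 2 * c * c + c ^ 2 := by
    have e : ∀ x, (f x - c) ^ 2 = ((f x) ^ 2 - (2 * c) * f x) + c ^ 2 := fun x => by ring
    calc ∫ x, (f x - c) ^ 2 ∂μ
        = ∫ x, ((f x) ^ 2 - (2 * c) * f x) + c ^ 2 ∂μ := by simp_rw [e]
      _ = (∫ x, ((f x) ^ 2 - (2 * c) * f x) ∂μ) + ∫ _x, (c ^ 2 : ℝ) ∂μ := by
          exact integral_add (hf2.sub (hf.const_mul (2 * c))) (integrable_const _)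
      _ = ((∫ x, (f x) ^ 2 ∂μ) - ∫ x, (2 * c) * f x ∂μ) + c ^ 2 := by
          rw [integral_sub hf2 (hf.const_mul (2 * c))]
          simp [measure_univ]
      _ = (∫ x, (f x) ^ 2 ∂μ) - 2 * c * c + c ^ 2 := by
          rw [MeasureTheory.integral_const_mul]
  rw [hexp] at h0
  nlinarith

-- finite Jensen
lemma sq_sum_le {ι : Type*} (s : Finset ι) (p x : ι → ℝ) (hp : ∀ i ∈ s, 0 ≤ p i)
    (hs : ∑ i ∈ s, p i = 1) :
    (∑ i ∈ s, p i * x i) ^ 2 ≤ ∑ i ∈ s, p i * (x i) ^ 2 := by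
  have cs := Finset.sum_mul_sq_le_sq_mul_sq s (fun i => Real.sqrt (p i))
    (fun i => Real.sqrt (p i) * x i)
  have e1 : ∀ i ∈ s, Real.sqrt (p i) * (Real.sqrt (p i) * x i) = p i * x i := fun i hi => by
    rw [← mul_assoc, Real.mul_self_sqrt (hp i hi)]
  have e2 : ∀ i ∈ s, Real.sqrt (p i) ^ 2 = p i := fun i hi => Real.sq_sqrt (hp i hi)
  have e3 : ∀ i ∈ s, (Real.sqrt (p i) * x i) ^ 2 = p i * (x i) ^ 2 := fun i hi => by
    rw [mul_pow, Real.sq_sqrt (hp i hi)]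
  rw [Finset.sum_congr rfl e1, Finset.sum_congr rfl e2, Finset.sum_congr rfl e3, hs, one_mul] at cs
  exact cs


section AuxProb

variable {𝒳 We Wd : Type*} [MeasurableSpace 𝒳] [MeasurableSpace We] [MeasurableSpace Wd]
  {C n d : ℕ}

/-- `φ z w c = P(Ŷ = c | x, w)`. -/
def phiA (enc : Kernel (𝒳 × We) (Fin d → ℝ)) (dec : Kernel ((Fin d → ℝ) × Wd) (Fin C))
    (z : 𝒳 × Fin C) (w : We × Wd) (c : Fin C) : ℝ :=
  ∫ u, (dec (u, w.2) {c}).toReal ∂(enc (z.1, w.1))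

variable (enc : Kernel (𝒳 × We) (Fin d → ℝ)) [IsMarkovKernel enc]
  (dec : Kernel ((Fin d → ℝ) × Wd) (Fin C)) [IsMarkovKernel dec]

lemma measurable_decR (c : Fin C) :
    Measurable fun p : (Fin d → ℝ) × Wd => (dec p {c}).toReal :=
  (dec.measurable_coe (measurableSet_singleton c)).ennreal_toReal

lemma phiA_meas (c : Fin C) :
    Measurable fun p : (𝒳 × Fin C) × (We × Wd) => phiA enc dec p.1 p.2 c := by
  have h1 : StronglyMeasurable
      (Function.uncurry fun (p : (𝒳 × Fin C) × (We × Wd)) (u : Fin d → ℝ) =>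
        (dec (u, p.2.2) {c}).toReal) := by
    apply Measurable.stronglyMeasurable
    exact (measurable_decR dec c).comp (measurable_snd.prodMk measurable_fst.snd.snd)
  have hm : Measurable fun p : (𝒳 × Fin C) × (We × Wd) => (p.1.1, p.2.1) :=
    measurable_fst.fst.prodMk measurable_snd.fst
  have h2 := h1.integral_kernel_prod_right (κ := enc.comap _ hm)
  simpa only [Kernel.comap_apply, phiA] using h2.measurable

lemma phiA_nonneg (z : 𝒳 × Fin C) (w : We × Wd) (c : Fin C) : 0 ≤ phiA enc dec z w c :=
  integral_nonneg fun _ => ENNReal.toReal_nonneg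

lemma decR_le_one (p : (Fin d → ℝ) × Wd) (c : Fin C) : (dec p {c}).toReal ≤ 1 := by
  have h := prob_le_one (μ := dec p) (s := {c})
  exact ENNReal.toReal_le_of_le_ofReal one_pos.le (by simpa using h)

lemma phiA_le_one (z : 𝒳 × Fin C) (w : We × Wd) (c : Fin C) : phiA enc dec z w c ≤ 1 := by
  have h1 : Integrable (fun u : Fin d → ℝ => (dec (u, w.2) {c}).toReal) (enc (z.1, w.1)) := by
    refine int_bdd ?_ (M := 1) fun u => ?_
    · exact ((measurable_decR dec c).comp
        (measurable_id.prodMk measurable_const)).aestronglyMeasurable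
    · rw [abs_of_nonneg ENNReal.toReal_nonneg]
      exact decR_le_one dec _ c
  calc phiA enc dec z w c ≤ ∫ _u, (1 : ℝ) ∂(enc (z.1, w.1)) :=
        integral_mono h1 (integrable_const 1) fun u => decR_le_one dec _ c
    _ = 1 := by simp [measure_univ]

lemma sum_phiA (z : 𝒳 × Fin C) (w : We × Wd) : ∑ c, phiA enc dec z w c = 1 := by
  have hint : ∀ c : Fin C, Integrable (fun u : Fin d → ℝ => (dec (u, w.2) {c}).toReal)
      (enc (z.1, w.1)) := fun c => by
    refine int_bdd ?_ (M := 1) fun u => ?_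
    · exact ((measurable_decR dec c).comp
        (measurable_id.prodMk measurable_const)).aestronglyMeasurable
    · rw [abs_of_nonneg ENNReal.toReal_nonneg]; exact decR_le_one dec _ c
  calc ∑ c, phiA enc dec z w c
      = ∫ u, ∑ c, (dec (u, w.2) {c}).toReal ∂(enc (z.1, w.1)) :=
        (integral_finset_sum _ fun c _ => hint c).symm
    _ = ∫ _u, (1:ℝ) ∂(enc (z.1, w.1)) :=
        integral_congr_ae (Filter.Eventually.of_forall fun u => sum_meas_singleton _)
    _ = 1 := by simp [measure_univ]

end AuxProb

section AuxProb2

variable {𝒳 We Wd : Type*} [MeasurableSpace 𝒳] [MeasurableSpace We] [MeasurableSpace Wd]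
  {C n d : ℕ}
variable (enc : Kernel (𝒳 × We) (Fin d → ℝ)) [IsMarkovKernel enc]
  (dec : Kernel ((Fin d → ℝ) × Wd) (Fin C)) [IsMarkovKernel dec]

lemma loss_eq (z : 𝒳 × Fin C) (w : We × Wd) :
    loss enc dec z w = ∑ c, (if c ≠ z.2 then (1:ℝ) else 0) * phiA enc dec z w c := by
  unfold loss
  have h1 : ∀ u : Fin d → ℝ,
      (∫ yh, (if yh ≠ z.2 then (1:ℝ) else 0) ∂(dec (u, w.2)))
        = ∑ c, (if c ≠ z.2 then (1:ℝ) else 0) * (dec (u, w.2) {c}).toReal := by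
    intro u
    rw [int_fin]
    exact Finset.sum_congr rfl fun c _ => by ring
  calc (∫ u, ∫ yh, (if yh ≠ z.2 then (1:ℝ) else 0) ∂(dec (u, w.2)) ∂(enc (z.1, w.1)))
      = ∫ u, ∑ c, (if c ≠ z.2 then (1:ℝ) else 0) * (dec (u, w.2) {c}).toReal
          ∂(enc (z.1, w.1)) := integral_congr_ae (Filter.Eventually.of_forall h1)
    _ = ∑ c, ∫ u, (if c ≠ z.2 then (1:ℝ) else 0) * (dec (u, w.2) {c}).toReal
          ∂(enc (z.1, w.1)) := by
        refine integral_finset_sum _ fun c _ => ?_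
        refine int_bdd ?_ (M := 1) fun u => ?_
        · exact (((measurable_decR dec c).comp
            (measurable_id.prodMk measurable_const)).const_mul _).aestronglyMeasurable
        · have hD := decR_le_one dec (u, w.2) c
          have hD0 : (0:ℝ) ≤ (dec (u, w.2) {c}).toReal := ENNReal.toReal_nonneg
          split_ifs <;> simp [abs_of_nonneg, hD0, hD]
    _ = ∑ c, (if c ≠ z.2 then (1:ℝ) else 0) * phiA enc dec z w c := by
        refine Finset.sum_congr rfl fun c _ => ?_
        rw [MeasureTheory.integral_const_mul]
        rfl

lemma loss_nonneg (z : 𝒳 × Fin C) (w : We × Wd) : 0 ≤ loss enc dec z w := by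
  rw [loss_eq]
  refine Finset.sum_nonneg fun c _ => mul_nonneg ?_ (phiA_nonneg enc dec z w c)
  split_ifs <;> norm_num

lemma loss_le_one (z : 𝒳 × Fin C) (w : We × Wd) : loss enc dec z w ≤ 1 := by
  rw [loss_eq]
  calc ∑ c, (if c ≠ z.2 then (1:ℝ) else 0) * phiA enc dec z w c
      ≤ ∑ c, phiA enc dec z w c := by
        refine Finset.sum_le_sum fun c _ => ?_
        split_ifs
        · rw [one_mul]
        · rw [zero_mul]; exact phiA_nonneg enc dec z w c
    _ = 1 := sum_phiA enc dec z w

lemma loss_meas (w : We × Wd) : Measurable fun z : 𝒳 × Fin C => loss enc dec z w := by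
  have h : (fun z : 𝒳 × Fin C => loss enc dec z w)
      = fun z => ∑ c, (if c ≠ z.2 then (1:ℝ) else 0) * phiA enc dec z w c := by
    funext z; exact loss_eq enc dec z w
  rw [h]
  refine Finset.measurable_sum _ fun c _ => Measurable.mul ?_ ?_
  · exact (Measurable.of_discrete (f := fun t : Fin C => if c ≠ t then (1:ℝ) else 0)).comp
      measurable_snd
  · exact (phiA_meas enc dec c).comp (measurable_id.prodMk measurable_const)

/-- weight of a prediction vector -/
def WtA (s : Fin n → 𝒳 × Fin C) (w : We × Wd) (yh : Fin n → Fin C) : ℝ :=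
  ∏ i, phiA enc dec (s i) w (yh i)

lemma WtA_nonneg (s : Fin n → 𝒳 × Fin C) (w : We × Wd) (yh : Fin n → Fin C) :
    0 ≤ WtA enc dec s w yh :=
  Finset.prod_nonneg fun i _ => phiA_nonneg enc dec _ _ _

lemma sum_WtA (s : Fin n → 𝒳 × Fin C) (w : We × Wd) :
    ∑ yh : Fin n → Fin C, WtA enc dec s w yh = 1 := by
  calc ∑ yh : Fin n → Fin C, ∏ i, phiA enc dec (s i) w (yh i)
      = ∏ i, ∑ c, phiA enc dec (s i) w c := (Fintype.prod_sum _).symm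
    _ = 1 := by simp [sum_phiA]

lemma WtA_meas (yh : Fin n → Fin C) :
    Measurable fun p : (Fin n → 𝒳 × Fin C) × (We × Wd) => WtA enc dec p.1 p.2 yh :=
  Finset.measurable_prod _ fun i _ =>
    Measurable.comp (g := fun q : (𝒳 × Fin C) × (We × Wd) => phiA enc dec q.1 q.2 (yh i))
      (f := fun p : (Fin n → 𝒳 × Fin C) × (We × Wd) => (p.1 i, p.2))
      (phiA_meas enc dec (yh i))
      (((measurable_pi_apply i).comp measurable_fst).prodMk measurable_snd)

lemma step_u (m : Fin n → Measure (Fin d → ℝ)) [∀ i, IsProbabilityMeasure (m i)] (wd : Wd)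
    (F : (Fin n → Fin C) → ℝ) :
    ∫ u, ∑ yh : Fin n → Fin C, (∏ i, (dec (u i, wd) {yh i}).toReal) * F yh ∂(Measure.pi m)
      = ∑ yh : Fin n → Fin C, (∏ i, ∫ v, (dec (v, wd) {yh i}).toReal ∂(m i)) * F yh := by
  rw [integral_finset_sum]
  · refine Finset.sum_congr rfl fun yh _ => ?_
    rw [MeasureTheory.integral_mul_const]
    congr 1
    exact integral_pi_prod m fun i v => (dec (v, wd) {yh i}).toReal
  · intro yh _
    refine int_bdd ?_ (M := |F yh|) fun u => ?_
    · exact ((Finset.measurable_prod _ fun i _ => (measurable_decR dec (yh i)).comp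
        ((measurable_pi_apply i).prodMk measurable_const)).mul_const _).aestronglyMeasurable
    · rw [abs_mul]
      have h0 : 0 ≤ ∏ i, (dec (u i, wd) {yh i}).toReal :=
        Finset.prod_nonneg fun i _ => ENNReal.toReal_nonneg
      have h1 : ∏ i, (dec (u i, wd) {yh i}).toReal ≤ 1 :=
        Finset.prod_le_one (fun i _ => ENNReal.toReal_nonneg) fun i _ => decR_le_one dec _ _
      rw [abs_of_nonneg h0]
      exact mul_le_of_le_one_left (abs_nonneg _) h1

lemma swap_sum {β : Type*} [Fintype β] (a b : β → ℝ) (h : β → β → ℝ) :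
    ∑ x, a x * ∑ y, b y * h x y = ∑ y, b y * ∑ x, a x * h x y := by
  simp_rw [Finset.mul_sum]
  rw [Finset.sum_comm]
  exact Finset.sum_congr rfl fun y _ => Finset.sum_congr rfl fun x _ => by ring

lemma inner_eq (g : (Fin n → Fin C) → (Fin n → Fin C) → (Fin n → Fin C) → (Fin n → Fin C) → ℝ)
    (s s' : Fin n → 𝒳 × Fin C) (w : We × Wd) :
    (∫ u, (∫ u', (∫ yh, (∫ yh',
        g (fun i => (s i).2) (fun i => (s' i).2) yh yh'
          ∂(Measure.pi fun i : Fin n => dec (u' i, w.2)))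
          ∂(Measure.pi fun i : Fin n => dec (u i, w.2)))
          ∂(Measure.pi fun i : Fin n => enc ((s' i).1, w.1)))
          ∂(Measure.pi fun i : Fin n => enc ((s i).1, w.1)))
      = ∑ yh : Fin n → Fin C, WtA enc dec s w yh * ∑ yh' : Fin n → Fin C,
          WtA enc dec s' w yh' * g (fun i => (s i).2) (fun i => (s' i).2) yh yh' := by
  set gv := g (fun i => (s i).2) (fun i => (s' i).2) with hgv
  have e1 : ∀ u u' : Fin n → Fin d → ℝ,
      (∫ yh, (∫ yh', gv yh yh' ∂(Measure.pi fun i : Fin n => dec (u' i, w.2)))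
        ∂(Measure.pi fun i : Fin n => dec (u i, w.2)))
      = ∑ yh' : Fin n → Fin C, (∏ i, (dec (u' i, w.2) {yh' i}).toReal) *
          ∑ yh : Fin n → Fin C, (∏ i, (dec (u i, w.2) {yh i}).toReal) * gv yh yh' := by
    intro u u'
    rw [int_pi_fin]
    rw [Finset.sum_congr rfl fun yh _ => by
      rw [int_pi_fin (fun i : Fin n => dec (u' i, w.2)) (gv yh)]]
    exact swap_sum _ _ _
  have e3 : ∀ u : Fin n → Fin d → ℝ,
      (∫ u', (∫ yh, (∫ yh', gv yh yh'
          ∂(Measure.pi fun i : Fin n => dec (u' i, w.2)))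
          ∂(Measure.pi fun i : Fin n => dec (u i, w.2)))
          ∂(Measure.pi fun i : Fin n => enc ((s' i).1, w.1)))
      = ∑ yh : Fin n → Fin C, (∏ i, (dec (u i, w.2) {yh i}).toReal) *
          ∑ yh' : Fin n → Fin C, WtA enc dec s' w yh' * gv yh yh' := by
    intro u
    rw [integral_congr_ae (Filter.Eventually.of_forall fun u' => e1 u u')]
    rw [step_u dec _ w.2]
    exact swap_sum _ _ _
  rw [integral_congr_ae (Filter.Eventually.of_forall fun u => e3 u)]
  rw [step_u dec _ w.2]
  rfl

/-- The reduced form of the joint expectation. -/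
def AgA (g : (Fin n → Fin C) → (Fin n → Fin C) → (Fin n → Fin C) → (Fin n → Fin C) → ℝ)
    (s s' : Fin n → 𝒳 × Fin C) (w : We × Wd) : ℝ :=
  ∑ yh : Fin n → Fin C, WtA enc dec s w yh * ∑ yh' : Fin n → Fin C,
    WtA enc dec s' w yh' * g (fun i => (s i).2) (fun i => (s' i).2) yh yh'

lemma AgA_meas (g : (Fin n → Fin C) → (Fin n → Fin C) → (Fin n → Fin C) → (Fin n → Fin C) → ℝ) :
    Measurable fun p : (Fin n → 𝒳 × Fin C) × (Fin n → 𝒳 × Fin C) × (We × Wd) =>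
      AgA enc dec g p.1 p.2.1 p.2.2 := by
  refine Finset.measurable_sum _ fun yh _ => Measurable.mul ?_ ?_
  · exact (WtA_meas enc dec yh).comp (measurable_fst.prodMk measurable_snd.snd)
  · refine Finset.measurable_sum _ fun yh' _ => Measurable.mul ?_ ?_
    · exact (WtA_meas enc dec yh').comp (measurable_snd.fst.prodMk measurable_snd.snd)
    · have hlab : Measurable fun p : (Fin n → 𝒳 × Fin C) × (Fin n → 𝒳 × Fin C) × (We × Wd) =>
          ((fun i => (p.1 i).2), (fun i => (p.2.1 i).2)) := by
        refine Measurable.prodMk ?_ ?_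
        · exact measurable_pi_lambda _ fun i =>
            measurable_snd.comp ((measurable_pi_apply i).comp measurable_fst)
        · exact measurable_pi_lambda _ fun i =>
            measurable_snd.comp ((measurable_pi_apply i).comp measurable_snd.fst)
      exact (Measurable.of_discrete
        (f := fun q : (Fin n → Fin C) × (Fin n → Fin C) => g q.1 q.2 yh yh')).comp hlab

lemma AgA_bound (g : (Fin n → Fin C) → (Fin n → Fin C) → (Fin n → Fin C) → (Fin n → Fin C) → ℝ)
    {M : ℝ} (hM : ∀ y y' yh yh', |g y y' yh yh'| ≤ M)
    (s s' : Fin n → 𝒳 × Fin C) (w : We × Wd) : |AgA enc dec g s s' w| ≤ M := by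
  have hin : ∀ yh, |∑ yh' : Fin n → Fin C, WtA enc dec s' w yh' *
      g (fun i => (s i).2) (fun i => (s' i).2) yh yh'| ≤ M := by
    intro yh
    calc |∑ yh' : Fin n → Fin C, WtA enc dec s' w yh' *
          g (fun i => (s i).2) (fun i => (s' i).2) yh yh'|
        ≤ ∑ yh' : Fin n → Fin C, WtA enc dec s' w yh' * M := by
          refine (Finset.abs_sum_le_sum_abs _ _).trans (Finset.sum_le_sum fun yh' _ => ?_)
          rw [abs_mul, abs_of_nonneg (WtA_nonneg enc dec s' w yh')]
          exact mul_le_mul_of_nonneg_left (hM _ _ _ _) (WtA_nonneg enc dec s' w yh')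
      _ = M := by rw [← Finset.sum_mul, sum_WtA, one_mul]
  calc |AgA enc dec g s s' w|
      ≤ ∑ yh : Fin n → Fin C, WtA enc dec s w yh * M := by
        refine (Finset.abs_sum_le_sum_abs _ _).trans (Finset.sum_le_sum fun yh _ => ?_)
        rw [abs_mul, abs_of_nonneg (WtA_nonneg enc dec s w yh)]
        exact mul_le_mul_of_nonneg_left (hin yh) (WtA_nonneg enc dec s w yh)
    _ = M := by rw [← Finset.sum_mul, sum_WtA, one_mul]

lemma AgA_mono (g₁ g₂ : (Fin n → Fin C) → (Fin n → Fin C) → (Fin n → Fin C) → (Fin n → Fin C) → ℝ)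
    (h : ∀ y y' yh yh', g₁ y y' yh yh' ≤ g₂ y y' yh yh')
    (s s' : Fin n → 𝒳 × Fin C) (w : We × Wd) :
    AgA enc dec g₁ s s' w ≤ AgA enc dec g₂ s s' w := by
  refine Finset.sum_le_sum fun yh _ => mul_le_mul_of_nonneg_left ?_ (WtA_nonneg enc dec s w yh)
  exact Finset.sum_le_sum fun yh' _ =>
    mul_le_mul_of_nonneg_left (h _ _ _ _) (WtA_nonneg enc dec s' w yh')

lemma AgA_sq (g : (Fin n → Fin C) → (Fin n → Fin C) → (Fin n → Fin C) → (Fin n → Fin C) → ℝ)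
    (s s' : Fin n → 𝒳 × Fin C) (w : We × Wd) :
    (AgA enc dec g s s' w) ^ 2 ≤
      AgA enc dec (fun y y' yh yh' => (g y y' yh yh') ^ 2) s s' w := by
  have h1 : AgA enc dec g s s' w = ∑ q : (Fin n → Fin C) × (Fin n → Fin C),
      (WtA enc dec s w q.1 * WtA enc dec s' w q.2) *
        g (fun i => (s i).2) (fun i => (s' i).2) q.1 q.2 := by
    unfold AgA
    rw [Fintype.sum_prod_type]
    refine Finset.sum_congr rfl fun yh _ => ?_
    rw [Finset.mul_sum]
    exact Finset.sum_congr rfl fun yh' _ => by ring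
  have h2 : AgA enc dec (fun y y' yh yh' => (g y y' yh yh') ^ 2) s s' w
      = ∑ q : (Fin n → Fin C) × (Fin n → Fin C),
      (WtA enc dec s w q.1 * WtA enc dec s' w q.2) *
        (g (fun i => (s i).2) (fun i => (s' i).2) q.1 q.2) ^ 2 := by
    unfold AgA
    rw [Fintype.sum_prod_type]
    refine Finset.sum_congr rfl fun yh _ => ?_
    rw [Finset.mul_sum]
    exact Finset.sum_congr rfl fun yh' _ => by ring
  rw [h1, h2]
  refine sq_sum_le _ _ _ (fun q _ => mul_nonneg (WtA_nonneg enc dec s w q.1)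
    (WtA_nonneg enc dec s' w q.2)) ?_
  rw [Fintype.sum_prod_type]
  calc ∑ yh : Fin n → Fin C, ∑ yh' : Fin n → Fin C,
        WtA enc dec s w yh * WtA enc dec s' w yh'
      = ∑ yh : Fin n → Fin C, WtA enc dec s w yh * 1 := by
        refine Finset.sum_congr rfl fun yh _ => ?_
        rw [← Finset.mul_sum, sum_WtA]
    _ = 1 := by simp [sum_WtA]

end AuxProb2

section AuxProb3

variable {𝒳 We Wd : Type*} [MeasurableSpace 𝒳] [MeasurableSpace We] [MeasurableSpace Wd]
  {C n d : ℕ}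
variable (enc : Kernel (𝒳 × We) (Fin d → ℝ)) [IsMarkovKernel enc]
  (dec : Kernel ((Fin d → ℝ) × Wd) (Fin C)) [IsMarkovKernel dec]

lemma key_i (s : Fin n → 𝒳 × Fin C) (w : We × Wd) (i : Fin n) :
    ∑ yh : Fin n → Fin C, (if yh i ≠ (s i).2 then (1:ℝ) else 0) * WtA enc dec s w yh
      = loss enc dec (s i) w := by
  have e : ∀ yh : Fin n → Fin C,
      ∏ j, ((if j = i then (if yh j ≠ (s i).2 then (1:ℝ) else 0) else 1) *
        phiA enc dec (s j) w (yh j))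
      = (if yh i ≠ (s i).2 then (1:ℝ) else 0) * WtA enc dec s w yh := by
    intro yh
    rw [Finset.prod_mul_distrib,
      Finset.prod_ite_eq' Finset.univ i (fun j => if yh j ≠ (s i).2 then (1:ℝ) else 0)]
    simp [WtA]
  calc ∑ yh : Fin n → Fin C, (if yh i ≠ (s i).2 then (1:ℝ) else 0) * WtA enc dec s w yh
      = ∑ yh : Fin n → Fin C, ∏ j, ((if j = i then (if yh j ≠ (s i).2 then (1:ℝ) else 0) else 1) *
          phiA enc dec (s j) w (yh j)) := (Finset.sum_congr rfl fun yh _ => (e yh).symm)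
    _ = ∏ j, ∑ c, ((if j = i then (if c ≠ (s i).2 then (1:ℝ) else 0) else 1) *
          phiA enc dec (s j) w c) :=
        (Fintype.prod_sum (fun j c => (if j = i then (if c ≠ (s i).2 then (1:ℝ) else 0) else 1) *
          phiA enc dec (s j) w c)).symm
    _ = loss enc dec (s i) w := by
        rw [Finset.prod_eq_single i]
        · simp only [if_pos rfl]
          exact (loss_eq enc dec (s i) w).symm
        · intro j _ hj
          simp only [if_neg hj, one_mul]
          exact sum_phiA enc dec (s j) w
        · intro h
          exact absurd (Finset.mem_univ i) h

lemma R_eq (s : Fin n → 𝒳 × Fin C) (w : We × Wd) :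
    ∑ yh : Fin n → Fin C, WtA enc dec s w yh * empErr (fun i => (s i).2) yh
      = empRisk enc dec s w := by
  unfold empErr empRisk
  calc ∑ yh : Fin n → Fin C, WtA enc dec s w yh *
        ((n : ℝ)⁻¹ * ∑ i, (if yh i ≠ (s i).2 then (1:ℝ) else 0))
      = ∑ yh : Fin n → Fin C, (n : ℝ)⁻¹ *
          ∑ i, (if yh i ≠ (s i).2 then (1:ℝ) else 0) * WtA enc dec s w yh := by
        refine Finset.sum_congr rfl fun yh _ => ?_
        rw [Finset.mul_sum, Finset.mul_sum]
        rw [Finset.mul_sum]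
        refine Finset.sum_congr rfl fun i _ => by ring
    _ = (n : ℝ)⁻¹ * ∑ i, ∑ yh : Fin n → Fin C,
          (if yh i ≠ (s i).2 then (1:ℝ) else 0) * WtA enc dec s w yh := by
        rw [← Finset.mul_sum, Finset.sum_comm]
    _ = (n : ℝ)⁻¹ * ∑ i, loss enc dec (s i) w := by
        rw [Finset.sum_congr rfl fun i _ => key_i enc dec s w i]

lemma AgA_g0 (s s' : Fin n → 𝒳 × Fin C) (w : We × Wd) :
    AgA enc dec (fun y y' yh yh' => empErr y' yh' - empErr y yh) s s' w
      = empRisk enc dec s' w - empRisk enc dec s w := by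
  unfold AgA
  have h1 : ∀ yh : Fin n → Fin C, ∑ yh' : Fin n → Fin C, WtA enc dec s' w yh' *
      (empErr (fun i => (s' i).2) yh' - empErr (fun i => (s i).2) yh)
      = empRisk enc dec s' w - empErr (fun i => (s i).2) yh := by
    intro yh
    simp_rw [mul_sub]
    rw [Finset.sum_sub_distrib, R_eq, ← Finset.sum_mul, sum_WtA, one_mul]
  rw [Finset.sum_congr rfl fun yh _ => by rw [h1 yh]]
  simp_rw [mul_sub]
  rw [Finset.sum_sub_distrib, ← Finset.sum_mul, sum_WtA, one_mul, R_eq]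

lemma empRisk_meas :
    Measurable fun p : (Fin n → 𝒳 × Fin C) × (We × Wd) => empRisk enc dec p.1 p.2 := by
  have h : (fun p : (Fin n → 𝒳 × Fin C) × (We × Wd) => empRisk enc dec p.1 p.2)
      = fun p => (n : ℝ)⁻¹ * ∑ i, ∑ c, (if c ≠ (p.1 i).2 then (1:ℝ) else 0) *
          phiA enc dec (p.1 i) p.2 c := by
    funext p
    unfold empRisk
    rw [Finset.sum_congr rfl fun i _ => loss_eq enc dec (p.1 i) p.2]
  rw [h]
  refine Measurable.const_mul ?_ _
  refine Finset.measurable_sum _ fun i _ => Finset.measurable_sum _ fun c _ =>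
    Measurable.mul ?_ ?_
  · exact (Measurable.of_discrete (f := fun t : Fin C => if c ≠ t then (1:ℝ) else 0)).comp
      (measurable_snd.comp ((measurable_pi_apply i).comp measurable_fst))
  · exact Measurable.comp (g := fun q : (𝒳 × Fin C) × (We × Wd) => phiA enc dec q.1 q.2 c)
      (f := fun p : (Fin n → 𝒳 × Fin C) × (We × Wd) => (p.1 i, p.2))
      (phiA_meas enc dec c)
      (((measurable_pi_apply i).comp measurable_fst).prodMk measurable_snd)

lemma empRisk_nonneg (s : Fin n → 𝒳 × Fin C) (w : We × Wd) : 0 ≤ empRisk enc dec s w :=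
  mul_nonneg (by positivity) (Finset.sum_nonneg fun i _ => loss_nonneg enc dec (s i) w)

lemma empRisk_le_one (s : Fin n → 𝒳 × Fin C) (w : We × Wd) : empRisk enc dec s w ≤ 1 := by
  unfold empRisk
  rcases Nat.eq_zero_or_pos n with hn | hn
  · subst hn; simp
  · have h1 : ∑ i, loss enc dec (s i) w ≤ (n : ℝ) := by
      calc ∑ i, loss enc dec (s i) w ≤ ∑ _i : Fin n, (1:ℝ) :=
            Finset.sum_le_sum fun i _ => loss_le_one enc dec (s i) w
        _ = (n : ℝ) := by simp
    have hn' : (0:ℝ) < n := by exact_mod_cast hn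
    calc (n : ℝ)⁻¹ * ∑ i, loss enc dec (s i) w ≤ (n : ℝ)⁻¹ * (n : ℝ) :=
          mul_le_mul_of_nonneg_left h1 (by positivity)
      _ = 1 := inv_mul_cancel₀ hn'.ne'

lemma int_empRisk (hn : 1 ≤ n) (μ : Measure (𝒳 × Fin C)) [IsProbabilityMeasure μ] (w : We × Wd) :
    ∫ s', empRisk enc dec s' w ∂(Measure.pi fun _ : Fin n => μ)
      = popRisk μ enc dec w := by
  unfold empRisk popRisk
  rw [MeasureTheory.integral_const_mul]
  have h1 : ∀ i : Fin n, ∫ s' : Fin n → 𝒳 × Fin C, loss enc dec (s' i) w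
      ∂(Measure.pi fun _ : Fin n => μ) = ∫ z, loss enc dec z w ∂μ := by
    intro i
    have e : ∀ s' : Fin n → 𝒳 × Fin C,
        loss enc dec (s' i) w = ∏ j, (if j = i then loss enc dec (s' j) w else 1) := by
      intro s'
      rw [Finset.prod_ite_eq' Finset.univ i (fun j => loss enc dec (s' j) w)]
      simp
    rw [integral_congr_ae (Filter.Eventually.of_forall e)]
    rw [integral_pi_prod (fun _ : Fin n => μ)
      (fun j z => if j = i then loss enc dec z w else 1)]
    rw [Finset.prod_eq_single i]
    · simp
    · intro j _ hj
      simp [hj, measure_univ]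
    · intro h
      exact absurd (Finset.mem_univ i) h
  have hint : ∀ i : Fin n, Integrable (fun s' : Fin n → 𝒳 × Fin C => loss enc dec (s' i) w)
      (Measure.pi fun _ : Fin n => μ) := by
    intro i
    refine int_bdd ?_ (M := 1) fun s' => ?_
    · exact ((loss_meas enc dec w).comp (measurable_pi_apply i)).aestronglyMeasurable
    · rw [abs_of_nonneg (loss_nonneg enc dec _ w)]
      exact loss_le_one enc dec _ w
  rw [integral_finset_sum _ fun i _ => hint i]
  rw [Finset.sum_congr rfl fun i _ => h1 i]
  rw [Finset.sum_const, Finset.card_univ, Fintype.card_fin, nsmul_eq_mul]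
  have hn' : (0:ℝ) < n := by exact_mod_cast hn
  rw [← mul_assoc, inv_mul_cancel₀ hn'.ne', one_mul]

lemma empErr_nonneg (y yh : Fin n → Fin C) : 0 ≤ empErr y yh := by
  unfold empErr
  refine mul_nonneg (by positivity) (Finset.sum_nonneg fun i _ => ?_)
  split_ifs <;> norm_num

lemma empErr_le_one (hn : 1 ≤ n) (y yh : Fin n → Fin C) : empErr y yh ≤ 1 := by
  unfold empErr
  have h1 : ∑ i, (if yh i ≠ y i then (1:ℝ) else 0) ≤ (n : ℝ) := by
    calc ∑ i, (if yh i ≠ y i then (1:ℝ) else 0) ≤ ∑ _i : Fin n, (1:ℝ) := by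
          refine Finset.sum_le_sum fun i _ => ?_
          split_ifs <;> norm_num
      _ = (n : ℝ) := by simp
  have hn' : (0:ℝ) < n := by exact_mod_cast hn
  calc (n : ℝ)⁻¹ * ∑ i, (if yh i ≠ y i then (1:ℝ) else 0) ≤ (n : ℝ)⁻¹ * (n : ℝ) :=
        mul_le_mul_of_nonneg_left h1 (by positivity)
    _ = 1 := inv_mul_cancel₀ hn'.ne'

end AuxProb3

lemma int_abs_le {α : Type*} [MeasurableSpace α] (μ : Measure α) [IsProbabilityMeasure μ]
    (f : α → ℝ) {M : ℝ} (h : ∀ x, |f x| ≤ M) : |∫ x, f x ∂μ| ≤ M := by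
  have h2 := norm_integral_le_of_norm_le_const (μ := μ) (f := f) (C := M)
    (Filter.Eventually.of_forall fun x => by rw [Real.norm_eq_abs]; exact h x)
  rw [Real.norm_eq_abs] at h2
  simpa [measure_univ] using h2

lemma sqb {x : ℝ} (h : |x| ≤ 1) : |x ^ 2| ≤ 1 := by
  rw [abs_of_nonneg (sq_nonneg x), ← sq_abs]
  nlinarith [abs_nonneg x]

section AuxProb4

variable {𝒳 We Wd : Type*} [MeasurableSpace 𝒳] [MeasurableSpace We] [MeasurableSpace Wd]
  {C n d : ℕ}
variable (enc : Kernel (𝒳 × We) (Fin d → ℝ)) [IsMarkovKernel enc]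
  (dec : Kernel ((Fin d → ℝ) × Wd) (Fin C)) [IsMarkovKernel dec]

lemma jointExp_eq (μ : Measure (𝒳 × Fin C)) [IsProbabilityMeasure μ]
    (alg : Kernel (Fin n → 𝒳 × Fin C) (We × Wd)) [IsMarkovKernel alg]
    (g : (Fin n → Fin C) → (Fin n → Fin C) → (Fin n → Fin C) → (Fin n → Fin C) → ℝ) :
    jointExp μ alg enc dec g = ∫ s, (∫ s', (∫ w, AgA enc dec g s s' w ∂(alg s))
      ∂(Measure.pi fun _ : Fin n => μ)) ∂(Measure.pi fun _ : Fin n => μ) := by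
  unfold jointExp
  refine integral_congr_ae (Filter.Eventually.of_forall fun s => ?_)
  refine integral_congr_ae (Filter.Eventually.of_forall fun s' => ?_)
  refine integral_congr_ae (Filter.Eventually.of_forall fun w => ?_)
  exact inner_eq enc dec g s s' w

lemma expGen_eq (hn : 1 ≤ n) (μ : Measure (𝒳 × Fin C)) [IsProbabilityMeasure μ]
    (alg : Kernel (Fin n → 𝒳 × Fin C) (We × Wd)) [IsMarkovKernel alg] :
    expGen μ alg enc dec = ∫ s, (∫ s', (∫ w,
        AgA enc dec (fun y y' yh yh' => empErr y' yh' - empErr y yh) s s' w ∂(alg s))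
      ∂(Measure.pi fun _ : Fin n => μ)) ∂(Measure.pi fun _ : Fin n => μ) := by
  unfold expGen
  refine integral_congr_ae (Filter.Eventually.of_forall fun s => ?_)
  have hintE : ∀ w : We × Wd, Integrable (fun s' : Fin n → 𝒳 × Fin C => empRisk enc dec s' w)
      (Measure.pi fun _ : Fin n => μ) := by
    intro w
    refine int_bdd ?_ (M := 1) fun s' => ?_
    · exact ((empRisk_meas enc dec).comp
        (measurable_id.prodMk measurable_const)).aestronglyMeasurable
    · rw [abs_of_nonneg (empRisk_nonneg enc dec s' w)]
      exact empRisk_le_one enc dec s' w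
  have h1 : ∀ w : We × Wd, popRisk μ enc dec w - empRisk enc dec s w
      = ∫ s', (empRisk enc dec s' w - empRisk enc dec s w)
          ∂(Measure.pi fun _ : Fin n => μ) := by
    intro w
    rw [integral_sub (hintE w) (integrable_const _), int_empRisk enc dec hn μ w, integral_const]
    simp [measure_univ]
  calc ∫ w, (popRisk μ enc dec w - empRisk enc dec s w) ∂(alg s)
      = ∫ w, (∫ s', (empRisk enc dec s' w - empRisk enc dec s w)
          ∂(Measure.pi fun _ : Fin n => μ)) ∂(alg s) :=
        integral_congr_ae (Filter.Eventually.of_forall fun w => h1 w)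
    _ = ∫ s', (∫ w, (empRisk enc dec s' w - empRisk enc dec s w) ∂(alg s))
          ∂(Measure.pi fun _ : Fin n => μ) := by
        apply integral_integral_swap
        refine int_bdd ?_ (M := 2) fun q => ?_
        · refine Measurable.aestronglyMeasurable (Measurable.sub ?_ ?_)
          · exact (empRisk_meas enc dec).comp (measurable_snd.prodMk measurable_fst)
          · exact (empRisk_meas enc dec).comp (measurable_const.prodMk measurable_fst)
        · have h3 := empRisk_nonneg enc dec q.2 q.1
          have h4 := empRisk_le_one enc dec q.2 q.1
          have h5 := empRisk_nonneg enc dec s q.1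
          have h6 := empRisk_le_one enc dec s q.1
          rw [abs_le]
          constructor <;> simp [Function.uncurry] <;> linarith
    _ = ∫ s', (∫ w, AgA enc dec (fun y y' yh yh' => empErr y' yh' - empErr y yh) s s' w
          ∂(alg s)) ∂(Measure.pi fun _ : Fin n => μ) := by
        refine integral_congr_ae (Filter.Eventually.of_forall fun s' => ?_)
        refine integral_congr_ae (Filter.Eventually.of_forall fun w => ?_)
        exact (AgA_g0 enc dec s s' w).symm

end AuxProb4


/-- **Unrealizable-case consequence of `h_D`:** for any stochastic learning algorithm, the
square of the expected generalization error is bounded by the expectation of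
`h_D(L̂(Y′,Ŷ′), L̂(Y,Ŷ))` under the joint law. -/
theorem sq_gen_le_exp_hD
    {𝒳 We Wd : Type*} [MeasurableSpace 𝒳] [MeasurableSpace We] [MeasurableSpace Wd]
    (C n d : ℕ) (hn : 1 ≤ n)
    (μ : Measure (𝒳 × Fin C)) [IsProbabilityMeasure μ]
    (alg : Kernel (Fin n → 𝒳 × Fin C) (We × Wd)) [IsMarkovKernel alg]
    (enc : Kernel (𝒳 × We) (Fin d → ℝ)) [IsMarkovKernel enc]
    (dec : Kernel ((Fin d → ℝ) × Wd) (Fin C)) [IsMarkovKernel dec] :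
    (expGen μ alg enc dec) ^ 2 ≤
      jointExp μ alg enc dec fun y y' yh yh' => hD (empErr y' yh') (empErr y yh) := by
  classical
  set piμ : Measure (Fin n → 𝒳 × Fin C) := Measure.pi fun _ : Fin n => μ with hpiμ
  haveI : IsProbabilityMeasure piμ := by rw [hpiμ]; infer_instance
  set g0 : (Fin n → Fin C) → (Fin n → Fin C) → (Fin n → Fin C) → (Fin n → Fin C) → ℝ :=
    fun y y' yh yh' => empErr y' yh' - empErr y yh with hg0
  set gh : (Fin n → Fin C) → (Fin n → Fin C) → (Fin n → Fin C) → (Fin n → Fin C) → ℝ :=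
    fun y y' yh yh' => hD (empErr y' yh') (empErr y yh) with hgh
  have hmemE : ∀ y yh : Fin n → Fin C, empErr y yh ∈ Set.Icc (0:ℝ) 1 := fun y yh =>
    ⟨empErr_nonneg y yh, empErr_le_one hn y yh⟩
  have hb0 : ∀ y y' yh yh', |g0 y y' yh yh'| ≤ 1 := by
    intro y y' yh yh'
    have h1 := hmemE y' yh'
    have h2 := hmemE y yh
    rw [hg0, abs_le]
    constructor <;> simp only [] <;> [linarith [h1.1, h2.2]; linarith [h1.2, h2.1]]
  have hbh : ∀ y y' yh yh', |gh y y' yh yh'| ≤ 2 := fun y y' yh yh' =>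
    abs_hD_le (hmemE y' yh') (hmemE y yh)
  have hpw : ∀ s s' w, (AgA enc dec g0 s s' w) ^ 2 ≤ AgA enc dec gh s s' w := by
    intro s s' w
    refine (AgA_sq enc dec g0 s s' w).trans (AgA_mono enc dec _ _ ?_ s s' w)
    intro y y' yh yh'
    simp only [hg0, hgh]
    exact sq_le_hD (hmemE y' yh') (hmemE y yh)
  -- measurability
  have m3 : Measurable fun p : (Fin n → 𝒳 × Fin C) × (Fin n → 𝒳 × Fin C) × (We × Wd) =>
      AgA enc dec g0 p.1 p.2.1 p.2.2 := AgA_meas enc dec g0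
  have m3h : Measurable fun p : (Fin n → 𝒳 × Fin C) × (Fin n → 𝒳 × Fin C) × (We × Wd) =>
      AgA enc dec gh p.1 p.2.1 p.2.2 := AgA_meas enc dec gh
  have kmeas : ∀ F : (Fin n → 𝒳 × Fin C) × (Fin n → 𝒳 × Fin C) × (We × Wd) → ℝ,
      Measurable F → Measurable fun p : (Fin n → 𝒳 × Fin C) × (Fin n → 𝒳 × Fin C) =>
        ∫ w, F (p.1, p.2, w) ∂(alg p.1) := by
    intro F hF
    have h1 : StronglyMeasurable (Function.uncurry
        fun (p : (Fin n → 𝒳 × Fin C) × (Fin n → 𝒳 × Fin C)) (w : We × Wd) =>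
          F (p.1, p.2, w)) := by
      apply Measurable.stronglyMeasurable
      exact hF.comp (measurable_fst.fst.prodMk (measurable_fst.snd.prodMk measurable_snd))
    have h2 := h1.integral_kernel_prod_right (κ := alg.comap Prod.fst measurable_fst)
    simpa [Kernel.comap_apply] using h2.measurable
  have m2 : Measurable fun p : (Fin n → 𝒳 × Fin C) × (Fin n → 𝒳 × Fin C) =>
      ∫ w, AgA enc dec g0 p.1 p.2 w ∂(alg p.1) := kmeas _ m3
  have m2sq : Measurable fun p : (Fin n → 𝒳 × Fin C) × (Fin n → 𝒳 × Fin C) =>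
      ∫ w, (AgA enc dec g0 p.1 p.2 w) ^ 2 ∂(alg p.1) := kmeas _ (m3.pow_const 2)
  have m2h : Measurable fun p : (Fin n → 𝒳 × Fin C) × (Fin n → 𝒳 × Fin C) =>
      ∫ w, AgA enc dec gh p.1 p.2 w ∂(alg p.1) := kmeas _ m3h
  have m1 : Measurable fun s : Fin n → 𝒳 × Fin C =>
      ∫ s', (∫ w, AgA enc dec g0 s s' w ∂(alg s)) ∂piμ :=
    (m2.stronglyMeasurable.integral_prod_right').measurable
  have m1h : Measurable fun s : Fin n → 𝒳 × Fin C =>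
      ∫ s', (∫ w, AgA enc dec gh s s' w ∂(alg s)) ∂piμ :=
    (m2h.stronglyMeasurable.integral_prod_right').measurable
  -- bounds
  have b3 : ∀ s s' w, |AgA enc dec g0 s s' w| ≤ 1 := fun s s' w =>
    AgA_bound enc dec g0 hb0 s s' w
  have b3h : ∀ s s' w, |AgA enc dec gh s s' w| ≤ 2 := fun s s' w =>
    AgA_bound enc dec gh hbh s s' w
  have b2 : ∀ s s', |∫ w, AgA enc dec g0 s s' w ∂(alg s)| ≤ 1 := fun s s' =>
    int_abs_le (alg s) _ (b3 s s')
  have b1 : ∀ s, |∫ s', (∫ w, AgA enc dec g0 s s' w ∂(alg s)) ∂piμ| ≤ 1 := fun s =>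
    int_abs_le piμ _ (fun s' => b2 s s')
  -- pointwise-in-s-s' comparison of the w-integrals
  have wmap : ∀ s s' : Fin n → 𝒳 × Fin C, Measurable fun w : We × Wd => (s, (s', w)) :=
    fun s s' => measurable_const.prodMk (measurable_const.prodMk measurable_id)
  have step_w : ∀ s s', ∫ w, (AgA enc dec g0 s s' w) ^ 2 ∂(alg s)
      ≤ ∫ w, AgA enc dec gh s s' w ∂(alg s) := by
    intro s s'
    refine integral_mono ?_ ?_ (hpw s s')
    · refine int_bdd ?_ (M := 1) fun w => sqb (b3 s s' w)
      exact (((m3.comp (wmap s s')).pow_const 2)).aestronglyMeasurable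
    · refine int_bdd ?_ (M := 2) fun w => b3h s s' w
      exact (m3h.comp (wmap s s')).aestronglyMeasurable
  have smap : ∀ s : Fin n → 𝒳 × Fin C,
      Measurable fun s' : Fin n → 𝒳 × Fin C => (s, s') :=
    fun s => measurable_const.prodMk measurable_id
  have step_s' : ∀ s, (∫ s', (∫ w, AgA enc dec g0 s s' w ∂(alg s)) ∂piμ) ^ 2
      ≤ ∫ s', (∫ w, AgA enc dec gh s s' w ∂(alg s)) ∂piμ := by
    intro s
    have h1 : (∫ s', (∫ w, AgA enc dec g0 s s' w ∂(alg s)) ∂piμ) ^ 2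
        ≤ ∫ s', (∫ w, AgA enc dec g0 s s' w ∂(alg s)) ^ 2 ∂piμ :=
      sq_integral_le piμ ((m2.comp (smap s)).aestronglyMeasurable) (fun s' => b2 s s')
    have h2 : ∫ s', (∫ w, AgA enc dec g0 s s' w ∂(alg s)) ^ 2 ∂piμ
        ≤ ∫ s', (∫ w, (AgA enc dec g0 s s' w) ^ 2 ∂(alg s)) ∂piμ := by
      refine integral_mono ?_ ?_ ?_
      · exact int_bdd (((m2.comp (smap s)).pow_const 2).aestronglyMeasurable) (M := 1)
          fun s' => sqb (b2 s s')
      · exact int_bdd ((m2sq.comp (smap s)).aestronglyMeasurable) (M := 1)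
          fun s' => int_abs_le (alg s) _ (fun w => sqb (b3 s s' w))
      · exact fun s' => sq_integral_le (alg s)
          ((m3.comp (wmap s s')).aestronglyMeasurable) (b3 s s')
    have h3 : ∫ s', (∫ w, (AgA enc dec g0 s s' w) ^ 2 ∂(alg s)) ∂piμ
        ≤ ∫ s', (∫ w, AgA enc dec gh s s' w ∂(alg s)) ∂piμ := by
      refine integral_mono ?_ ?_ (fun s' => step_w s s')
      · exact int_bdd ((m2sq.comp (smap s)).aestronglyMeasurable) (M := 1)
          fun s' => int_abs_le (alg s) _ (fun w => sqb (b3 s s' w))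
      · exact int_bdd ((m2h.comp (smap s)).aestronglyMeasurable) (M := 2)
          fun s' => int_abs_le (alg s) _ (b3h s s')
    exact h1.trans (h2.trans h3)
  have final : (∫ s, (∫ s', (∫ w, AgA enc dec g0 s s' w ∂(alg s)) ∂piμ) ∂piμ) ^ 2
      ≤ ∫ s, (∫ s', (∫ w, AgA enc dec gh s s' w ∂(alg s)) ∂piμ) ∂piμ := by
    have h1 := sq_integral_le piμ m1.aestronglyMeasurable b1
    have h2 : ∫ s, (∫ s', (∫ w, AgA enc dec g0 s s' w ∂(alg s)) ∂piμ) ^ 2 ∂piμ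
        ≤ ∫ s, (∫ s', (∫ w, AgA enc dec gh s s' w ∂(alg s)) ∂piμ) ∂piμ := by
      refine integral_mono ?_ ?_ step_s'
      · exact int_bdd ((m1.pow_const 2).aestronglyMeasurable) (M := 1) fun s => sqb (b1 s)
      · exact int_bdd (m1h.aestronglyMeasurable) (M := 2)
          fun s => int_abs_le piμ _ (fun s' => int_abs_le (alg s) _ (b3h s s'))
    exact h1.trans h2
  rw [expGen_eq enc dec hn μ alg, jointExp_eq enc dec μ alg]
  exact final

end
end

section
/- Variational upper bound for KL divergence to a finite mixture: let P be a probability measure, M ≥ 1, α = (α₁,…,α_M) a probability vector with α_m > 0 for all m, and Q₁,…,Q_M probability measures on the same space with D_KL(P‖Q_m) < ∞ for all m. Then D_KL( P ‖ ∑_{m∈[M]} α_m·Q_m ) ≤ −log( ∑_{m∈[M]} α_m·e^{−D_KL(P‖Q_m)} ). -/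
open MeasureTheory Real
open scoped ENNReal

noncomputable section

/-- Auxiliary: `withDensity` of a finite sum of densities. -/
lemma withDensity_finset_sum_aux {Ω : Type*} [MeasurableSpace Ω] (ν : Measure Ω)
    {ι : Type*} (s : Finset ι) (f : ι → Ω → ℝ≥0∞) (hf : ∀ i, Measurable (f i)) :
    ν.withDensity (fun x => ∑ i ∈ s, f i x) = ∑ i ∈ s, ν.withDensity (f i) := by
  classical
  induction s using Finset.induction with
  | empty => simp
  | @insert a s ha ih =>
    have h1 : (fun x => ∑ i ∈ insert a s, f i x)
        = f a + fun x => ∑ i ∈ s, f i x := by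
      ext x; simp [Finset.sum_insert ha]
    rw [h1, withDensity_add_left (hf a), ih, Finset.sum_insert ha]

/-- **Variational upper bound for the KL divergence to a finite mixture:**
`D_KL(P ‖ ∑ₘ αₘ Qₘ) ≤ −log(∑ₘ αₘ e^{−D_KL(P‖Qₘ)})`. -/
theorem klDiv_mixture_le_var
    {Ω : Type*} [MeasurableSpace Ω] (M : ℕ) (hM : 1 ≤ M)
    (P : Measure Ω) (hP : IsProbabilityMeasure P)
    (α : Fin M → ℝ) (hα : ∀ m, 0 < α m) (hαsum : ∑ m, α m = 1)
    (Q : Fin M → Measure Ω) (hQ : ∀ m, IsProbabilityMeasure (Q m))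
    (hfin : ∀ m, klDiv P (Q m) ≠ ∞) :
    klDiv P (∑ m, ENNReal.ofReal (α m) • Q m) ≤
      ENNReal.ofReal
        (-Real.log (∑ m, α m * Real.exp (-(klDiv P (Q m)).toReal))) := by
  classical
  haveI : Nonempty (Fin M) := ⟨⟨0, hM⟩⟩
  set ν : Measure Ω := ∑ m, ENNReal.ofReal (α m) • Q m with hνdef
  have hα0 : ∀ m, (0:ℝ) ≤ α m := fun m => (hα m).le
  -- from finiteness hypothesis: absolute continuity and integrability
  have hcond : ∀ m, P ≪ Q m ∧ Integrable (llr P (Q m)) P := by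
    intro m
    by_contra h
    exact hfin m (by rw [klDiv, if_neg h])
  have hPQ : ∀ m, P ≪ Q m := fun m => (hcond m).1
  have hint : ∀ m, Integrable (llr P (Q m)) P := fun m => (hcond m).2
  have hklm : ∀ m, klDiv P (Q m) = ENNReal.ofReal (∫ x, llr P (Q m) x ∂P) := by
    intro m; rw [klDiv, if_pos (hcond m)]
  -- ν is a probability measure
  have hν_univ : ν Set.univ = 1 := by
    rw [hνdef, Measure.finset_sum_apply]
    simp only [Measure.smul_apply, measure_univ, smul_eq_mul, mul_one]
    rw [← ENNReal.ofReal_sum_of_nonneg (fun i _ => hα0 i), hαsum, ENNReal.ofReal_one]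
  haveI hνP : IsProbabilityMeasure ν := ⟨hν_univ⟩
  -- Q m ≪ ν
  have hQν : ∀ m, Q m ≪ ν := by
    intro m
    refine Measure.AbsolutelyContinuous.mk (fun s _ hs0 => ?_)
    rw [hνdef, Measure.finset_sum_apply] at hs0
    have hterm := (Finset.sum_eq_zero_iff.1 hs0) m (Finset.mem_univ m)
    simp only [Measure.smul_apply, smul_eq_mul] at hterm
    rcases mul_eq_zero.1 hterm with h | h
    · exact absurd h (by simp [ENNReal.ofReal_eq_zero, not_le, hα m])
    · exact h
  have hPν : P ≪ ν := (hPQ ⟨0, hM⟩).trans (hQν ⟨0, hM⟩)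
  -- the weighted densities sum to 1 a.e. ν
  have hνwd : ν.withDensity
      (fun x => ∑ m, ENNReal.ofReal (α m) * (Q m).rnDeriv ν x) = ν := by
    rw [withDensity_finset_sum_aux ν Finset.univ _
      (fun m => (Measure.measurable_rnDeriv (Q m) ν).const_mul _)]
    rw [hνdef]
    refine Finset.sum_congr rfl (fun m _ => ?_)
    have h1 : (fun x => ENNReal.ofReal (α m) * (Q m).rnDeriv ν x)
        = ENNReal.ofReal (α m) • (Q m).rnDeriv ν := rfl
    rw [h1, withDensity_smul _ (Measure.measurable_rnDeriv (Q m) ν),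
      Measure.withDensity_rnDeriv_eq _ _ (hQν m)]
  have hsum_one : ∀ᵐ x ∂ν, ∑ m, ENNReal.ofReal (α m) * (Q m).rnDeriv ν x = 1 := by
    have hmeas : Measurable (fun x => ∑ m, ENNReal.ofReal (α m) * (Q m).rnDeriv ν x) :=
      Finset.measurable_sum _ (fun m _ => (Measure.measurable_rnDeriv (Q m) ν).const_mul _)
    have h1 := Measure.rnDeriv_withDensity ν hmeas
    rw [hνwd] at h1
    filter_upwards [h1.symm.trans (Measure.rnDeriv_self ν)] with x hx using hx
  -- the a.e. (w.r.t. P) package of pointwise facts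
  have hae : ∀ᵐ x ∂P,
      (∑ m, α m * ((Q m).rnDeriv ν x).toReal = 1) ∧
      (∀ m, 0 < ((Q m).rnDeriv ν x).toReal) ∧
      (∀ m, llr P ν x = llr P (Q m) x + Real.log (((Q m).rnDeriv ν x).toReal)) := by
    have h1 : ∀ᵐ x ∂P, 0 < P.rnDeriv ν x := Measure.rnDeriv_pos hPν
    have h2 : ∀ᵐ x ∂P, P.rnDeriv ν x < ∞ := hPν.ae_le (Measure.rnDeriv_lt_top P ν)
    have h3 : ∀ᵐ x ∂P, ∀ m, P.rnDeriv (Q m) x < ∞ :=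
      ae_all_iff.2 (fun m => (hPQ m).ae_le (Measure.rnDeriv_lt_top P (Q m)))
    have h4 : ∀ᵐ x ∂P, ∀ m, (Q m).rnDeriv ν x < ∞ :=
      ae_all_iff.2 (fun m => hPν.ae_le (Measure.rnDeriv_lt_top (Q m) ν))
    have h5 : ∀ᵐ x ∂P, ∀ m, P.rnDeriv (Q m) x * (Q m).rnDeriv ν x = P.rnDeriv ν x :=
      ae_all_iff.2 (fun m => hPν.ae_le (Measure.rnDeriv_mul_rnDeriv (hPQ m)))
    have h6 : ∀ᵐ x ∂P, ∑ m, ENNReal.ofReal (α m) * (Q m).rnDeriv ν x = 1 :=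
      hPν.ae_le hsum_one
    filter_upwards [h1, h2, h3, h4, h5, h6] with x hx1 hx2 hx3 hx4 hx5 hx6
    have hpr : 0 < (P.rnDeriv ν x).toReal := ENNReal.toReal_pos hx1.ne' hx2.ne
    have hmul : ∀ m, (P.rnDeriv (Q m) x).toReal * ((Q m).rnDeriv ν x).toReal
        = (P.rnDeriv ν x).toReal := by
      intro m; rw [← ENNReal.toReal_mul, hx5 m]
    have hq0 : ∀ m, ((Q m).rnDeriv ν x).toReal ≠ 0 := by
      intro m h
      have hm := hmul m
      rw [h, mul_zero] at hm
      exact hpr.ne' hm.symm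
    have hr0 : ∀ m, (P.rnDeriv (Q m) x).toReal ≠ 0 := by
      intro m h
      have hm := hmul m
      rw [h, zero_mul] at hm
      exact hpr.ne' hm.symm
    refine ⟨?_, fun m => (ENNReal.toReal_nonneg).lt_of_ne (Ne.symm (hq0 m)), ?_⟩
    · have := congrArg ENNReal.toReal hx6
      rw [ENNReal.toReal_sum (fun m _ => (ENNReal.mul_lt_top ENNReal.ofReal_lt_top
        (hx4 m)).ne)] at this
      simpa only [ENNReal.toReal_mul, ENNReal.toReal_ofReal (hα0 _), ENNReal.toReal_one]
        using this
    · intro m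
      have : llr P ν x = Real.log ((P.rnDeriv (Q m) x).toReal
          * ((Q m).rnDeriv ν x).toReal) := by
        rw [hmul m]; rfl
      rw [this, Real.log_mul (hr0 m) (hq0 m)]; rfl
  -- integrability of llr P ν
  have hintν : Integrable (llr P ν) P := by
    have hg : Integrable
        (fun x => (∑ m, |llr P (Q m) x|) + (∑ m, |Real.log (α m)|)) P :=
      (integrable_finset_sum _ (fun m _ => (hint m).abs)).add (integrable_const _)
    refine hg.mono' (stronglyMeasurable_llr P ν).aestronglyMeasurable ?_
    filter_upwards [hae] with x hx
    obtain ⟨hxsum, hxpos, hxllr⟩ := hx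
    rw [Real.norm_eq_abs, abs_le]
    constructor
    · -- lower bound: some m has density ≥ 1
      obtain ⟨m1, hm1⟩ : ∃ m, 1 ≤ ((Q m).rnDeriv ν x).toReal := by
        by_contra h
        push_neg at h
        have : (∑ m, α m * ((Q m).rnDeriv ν x).toReal) < ∑ m, α m :=
          Finset.sum_lt_sum_of_nonempty Finset.univ_nonempty
            (fun m _ => by nlinarith [hα m, h m, (hxpos m).le])
        rw [hxsum, hαsum] at this
        exact lt_irrefl _ this
      have h1 : llr P ν x = llr P (Q m1) x + Real.log (((Q m1).rnDeriv ν x).toReal) :=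
        hxllr m1
      have h2 : (0:ℝ) ≤ Real.log (((Q m1).rnDeriv ν x).toReal) :=
        Real.log_nonneg hm1
      have h3 : -|llr P (Q m1) x| ≤ llr P (Q m1) x := neg_abs_le _
      have h4 : |llr P (Q m1) x| ≤ ∑ m, |llr P (Q m) x| :=
        Finset.single_le_sum (f := fun m => |llr P (Q m) x|)
          (fun m _ => abs_nonneg _) (Finset.mem_univ m1)
      have h5 : (0:ℝ) ≤ ∑ m, |Real.log (α m)| :=
        Finset.sum_nonneg (fun m _ => abs_nonneg _)
      linarith
    · -- upper bound via m0
      set m0 : Fin M := ⟨0, hM⟩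
      have hle : α m0 * ((Q m0).rnDeriv ν x).toReal ≤ 1 := by
        rw [← hxsum]
        exact Finset.single_le_sum (f := fun m => α m * ((Q m).rnDeriv ν x).toReal)
          (fun m _ => mul_nonneg (hα0 m) (hxpos m).le) (Finset.mem_univ m0)
      have hq1 : ((Q m0).rnDeriv ν x).toReal ≤ (α m0)⁻¹ := by
        rw [← one_div, le_div_iff₀ (hα m0), mul_comm]
        exact hle
      have h2 : Real.log (((Q m0).rnDeriv ν x).toReal) ≤ -Real.log (α m0) := by
        calc Real.log (((Q m0).rnDeriv ν x).toReal) ≤ Real.log ((α m0)⁻¹) :=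
              Real.log_le_log (hxpos m0) hq1
          _ = -Real.log (α m0) := Real.log_inv _
      have h4 : |Real.log (α m0)| ≤ ∑ m, |Real.log (α m)| :=
        Finset.single_le_sum (f := fun m => |Real.log (α m)|)
          (fun m _ => abs_nonneg _) (Finset.mem_univ m0)
      have h5 : llr P (Q m0) x ≤ |llr P (Q m0) x| := le_abs_self _
      have h6 : |llr P (Q m0) x| ≤ ∑ m, |llr P (Q m) x| :=
        Finset.single_le_sum (f := fun m => |llr P (Q m) x|)
          (fun m _ => abs_nonneg _) (Finset.mem_univ m0)
      have h7 := hxllr m0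
      have h8 : -Real.log (α m0) ≤ |Real.log (α m0)| := neg_le_abs _
      linarith
  -- set up the optimal weights γ
  set I : Fin M → ℝ := fun m => ∫ x, llr P (Q m) x ∂P with hIdef
  set Z : ℝ := ∑ m, α m * Real.exp (-(I m)) with hZdef
  have hZpos : 0 < Z :=
    Finset.sum_pos (fun m _ => mul_pos (hα m) (Real.exp_pos _)) Finset.univ_nonempty
  set γ : Fin M → ℝ := fun m => α m * Real.exp (-(I m)) / Z with hγdef
  have hγpos : ∀ m, 0 < γ m := fun m =>
    div_pos (mul_pos (hα m) (Real.exp_pos _)) hZpos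
  have hγsum : ∑ m, γ m = 1 := by
    rw [hγdef]
    rw [← Finset.sum_div, ← hZdef, div_self hZpos.ne']
  have hlogγ : ∀ m, Real.log (γ m) = Real.log (α m) - I m - Real.log Z := by
    intro m
    rw [hγdef]
    rw [Real.log_div (mul_pos (hα m) (Real.exp_pos _)).ne' hZpos.ne',
      Real.log_mul (hα m).ne' (Real.exp_pos _).ne', Real.log_exp]
    ring
  -- pointwise variational bound
  have hptwise : ∀ᵐ x ∂P, llr P ν x
      ≤ ∑ m, γ m * (llr P (Q m) x + (Real.log (γ m) - Real.log (α m))) := by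
    filter_upwards [hae] with x hx
    obtain ⟨hxsum, hxpos, hxllr⟩ := hx
    set L : ℝ := llr P ν x
    -- Jensen for log
    have hconc : ConcaveOn ℝ (Set.Ioi (0:ℝ)) Real.log :=
      strictConcaveOn_log_Ioi.concaveOn
    have hjen := hconc.le_map_sum (t := Finset.univ) (w := γ)
      (p := fun m => α m * ((Q m).rnDeriv ν x).toReal / γ m)
      (fun m _ => (hγpos m).le) hγsum
      (fun m _ => Set.mem_Ioi.2
        (div_pos (mul_pos (hα m) (hxpos m)) (hγpos m)))
    have hsum_eq : ∑ m, γ m • (α m * ((Q m).rnDeriv ν x).toReal / γ m) = 1 := by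
      rw [← hxsum]
      refine Finset.sum_congr rfl (fun m _ => ?_)
      rw [smul_eq_mul, mul_div_cancel₀ _ (hγpos m).ne']
    rw [hsum_eq, Real.log_one] at hjen
    -- expand the logs
    have hexp : ∀ m, Real.log (α m * ((Q m).rnDeriv ν x).toReal / γ m)
        = Real.log (α m) + (L - llr P (Q m) x) - Real.log (γ m) := by
      intro m
      rw [Real.log_div (mul_pos (hα m) (hxpos m)).ne' (hγpos m).ne',
        Real.log_mul (hα m).ne' (hxpos m).ne']
      have : Real.log (((Q m).rnDeriv ν x).toReal) = L - llr P (Q m) x := by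
        have := hxllr m; linarith [this]
      rw [this]
    have hjen2 : ∑ m, γ m * (Real.log (α m) + (L - llr P (Q m) x) - Real.log (γ m))
        ≤ 0 := by
      refine le_trans (le_of_eq ?_) hjen
      refine Finset.sum_congr rfl (fun m _ => ?_)
      rw [smul_eq_mul, hexp m]
    have hre : ∑ m, γ m * (Real.log (α m) + (L - llr P (Q m) x) - Real.log (γ m))
        = L - ∑ m, γ m * (llr P (Q m) x + (Real.log (γ m) - Real.log (α m))) := by
      have h1 : ∑ m, (γ m * L
            - γ m * (llr P (Q m) x + (Real.log (γ m) - Real.log (α m))))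
          = ∑ m, γ m * (Real.log (α m) + (L - llr P (Q m) x) - Real.log (γ m)) :=
        Finset.sum_congr rfl (fun m _ => by ring)
      rw [← h1, Finset.sum_sub_distrib, ← Finset.sum_mul, hγsum, one_mul]
    rw [hre] at hjen2
    linarith
  -- integrate the pointwise bound
  have hintR : Integrable
      (fun x => ∑ m, γ m * (llr P (Q m) x + (Real.log (γ m) - Real.log (α m)))) P :=
    integrable_finset_sum _ (fun m _ =>
      (((hint m).add (integrable_const _)).const_mul _))
  have hI1 : ∫ x, llr P ν x ∂P
      ≤ ∫ x, (∑ m, γ m * (llr P (Q m) x + (Real.log (γ m) - Real.log (α m)))) ∂P :=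
    integral_mono_ae hintν hintR hptwise
  have hI2 : ∫ x, (∑ m, γ m * (llr P (Q m) x + (Real.log (γ m) - Real.log (α m)))) ∂P
      = -Real.log Z := by
    have hswap : ∫ x, (∑ m, γ m * (llr P (Q m) x + (Real.log (γ m) - Real.log (α m)))) ∂P
        = ∑ m, ∫ x, γ m * (llr P (Q m) x + (Real.log (γ m) - Real.log (α m))) ∂P :=
      integral_finset_sum _ (fun m _ =>
        (((hint m).add (integrable_const _)).const_mul _))
    rw [hswap]
    have hterm : ∀ m, ∫ x, γ m * (llr P (Q m) x + (Real.log (γ m) - Real.log (α m))) ∂P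
        = γ m * (-Real.log Z) := by
      intro m
      rw [integral_const_mul, integral_add (hint m) (integrable_const _),
        integral_const, probReal_univ, one_smul]
      have hIm : ∫ x, llr P (Q m) x ∂P = I m := rfl
      rw [hIm, hlogγ m]
      ring
    rw [Finset.sum_congr rfl (fun m _ => hterm m), ← Finset.sum_mul, hγsum, one_mul]
  -- conclude
  have hkl : klDiv P ν = ENNReal.ofReal (∫ x, llr P ν x ∂P) := by
    rw [klDiv, if_pos ⟨hPν, hintν⟩]
  -- compare Z with the Z appearing in the statement
  have hIle : ∀ m, I m ≤ (klDiv P (Q m)).toReal := by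
    intro m
    have h1 : klDiv P (Q m) = ENNReal.ofReal (I m) := hklm m
    rw [h1]
    rcases le_or_gt 0 (I m) with h | h
    · rw [ENNReal.toReal_ofReal h]
    · exact h.le.trans ENNReal.toReal_nonneg
  have hZ2pos : 0 < ∑ m, α m * Real.exp (-(klDiv P (Q m)).toReal) :=
    Finset.sum_pos (fun m _ => mul_pos (hα m) (Real.exp_pos _)) Finset.univ_nonempty
  have hZle : (∑ m, α m * Real.exp (-(klDiv P (Q m)).toReal)) ≤ Z := by
    rw [hZdef]
    refine Finset.sum_le_sum (fun m _ => ?_)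
    exact mul_le_mul_of_nonneg_left (Real.exp_le_exp.2 (neg_le_neg (hIle m))) (hα0 m)
  have hlogle : -Real.log Z ≤ -Real.log (∑ m, α m * Real.exp (-(klDiv P (Q m)).toReal)) :=
    neg_le_neg (Real.log_le_log hZ2pos hZle)
  calc klDiv P ν = ENNReal.ofReal (∫ x, llr P ν x ∂P) := hkl
    _ ≤ ENNReal.ofReal (-Real.log Z) := ENNReal.ofReal_le_ofReal (hI1.trans_eq hI2)
    _ ≤ ENNReal.ofReal
        (-Real.log (∑ m, α m * Real.exp (-(klDiv P (Q m)).toReal))) :=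
      ENNReal.ofReal_le_ofReal hlogle

end
end
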